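/- arXiv:2309.03405 — 5 statements merged into one kernel-verified Lean document; each statement's English description precedes it below -/
import Mathlib

section
/- Let 𝒜 be an almost disjoint family on ℕ. Then the following are equivalent: (i) 𝒜 is a MAD family; (ii) the Isbell–Mrówka space Ψ(𝒜) is pseudocompact; (iii) the countable power Ψ(𝒜)^ℕ (with the product topology) is pseudocompact. -/
open Set

/-- An almost disjoint family on ℕ: an infinite collection of infinite subsets of ℕ
any two distinct members of which have finite intersection. -/
def AlmostDisjointFamily (𝒜 : Set (Set ℕ)) : Prop :=
  𝒜.Infinite ∧ (∀ a ∈ 𝒜, a.Infinite) ∧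
    ∀ a ∈ 𝒜, ∀ b ∈ 𝒜, a ≠ b → (a ∩ b).Finite

/-- A MAD family: an almost disjoint family such that every infinite subset of ℕ
has infinite intersection with some member. -/
def MadFamily (𝒜 : Set (Set ℕ)) : Prop :=
  AlmostDisjointFamily 𝒜 ∧ ∀ X : Set ℕ, X.Infinite → ∃ a ∈ 𝒜, (X ∩ a).Infinite

/-- The underlying set of the Isbell–Mrówka space: ℕ ⊔ 𝒜. -/
def PsiSpace (𝒜 : Set (Set ℕ)) : Type := ℕ ⊕ {a : Set ℕ // a ∈ 𝒜}

/-- The isolated points of the Isbell–Mrówka space. -/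
def PsiSpace.nat {𝒜 : Set (Set ℕ)} (n : ℕ) : PsiSpace 𝒜 := Sum.inl n

/-- The points of the Isbell–Mrówka space corresponding to members of 𝒜. -/
def PsiSpace.pt {𝒜 : Set (Set ℕ)} (a : {a : Set ℕ // a ∈ 𝒜}) : PsiSpace 𝒜 := Sum.inr a

/-- The topology of the Isbell–Mrówka space, generated by the singletons {n}
and the sets {a} ∪ (a \ F) for F finite. -/
instance (𝒜 : Set (Set ℕ)) : TopologicalSpace (PsiSpace 𝒜) :=
  TopologicalSpace.generateFrom
    ({S | ∃ n : ℕ, S = {PsiSpace.nat n}} ∪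
      {S | ∃ (a : {a : Set ℕ // a ∈ 𝒜}) (F : Set ℕ), F.Finite ∧
        S = insert (PsiSpace.pt a) (PsiSpace.nat '' ((a : Set ℕ) \ F))})

/-- A space is pseudocompact if every continuous real-valued function on it is bounded. -/
def Pseudocompact (X : Type*) [TopologicalSpace X] : Prop :=
  ∀ f : X → ℝ, Continuous f → ∃ M : ℝ, ∀ x, |f x| ≤ M

namespace PsiAux
open Filter Topology TopologicalSpace

variable {𝒜 : Set (Set ℕ)}

abbrev Gen (𝒜 : Set (Set ℕ)) : Set (Set (PsiSpace 𝒜)) :=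
  {S | ∃ n : ℕ, S = {PsiSpace.nat n}} ∪
    {S | ∃ (a : {a : Set ℕ // a ∈ 𝒜}) (F : Set ℕ), F.Finite ∧
      S = insert (PsiSpace.pt a) (PsiSpace.nat '' ((a : Set ℕ) \ F))}

lemma topology_eq (𝒜 : Set (Set ℕ)) :
    (inferInstance : TopologicalSpace (PsiSpace 𝒜)) = generateFrom (Gen 𝒜) := rfl

lemma nat_ne_pt (n : ℕ) (a : {a : Set ℕ // a ∈ 𝒜}) :
    (PsiSpace.nat n : PsiSpace 𝒜) ≠ PsiSpace.pt a := by
  simp [PsiSpace.nat, PsiSpace.pt]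
  intro h; cases h

lemma pt_injective : Function.Injective (PsiSpace.pt (𝒜 := 𝒜)) :=
  fun _ _ h => Sum.inr.inj h

lemma psi_cases (x : PsiSpace 𝒜) : (∃ n, x = PsiSpace.nat n) ∨ ∃ a, x = PsiSpace.pt a :=
  Sum.casesOn x (fun n => Or.inl ⟨n, rfl⟩) (fun a => Or.inr ⟨a, rfl⟩)

lemma pt_mem_gen {S : Set (PsiSpace 𝒜)} (hS : S ∈ Gen 𝒜) {a : {a : Set ℕ // a ∈ 𝒜}}
    (ha : PsiSpace.pt a ∈ S) :
    ∃ F : Set ℕ, F.Finite ∧ S = insert (PsiSpace.pt a) (PsiSpace.nat '' ((a : Set ℕ) \ F)) := by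
  rcases hS with ⟨n, rfl⟩ | ⟨b, F, hF, rfl⟩
  · exact absurd ha.symm (nat_ne_pt n a)
  · have hab : a = b := by
      rcases ha with h | ⟨m, _, h⟩
      · exact pt_injective h
      · exact absurd h (nat_ne_pt m a)
    subst hab
    exact ⟨F, hF, rfl⟩

lemma isOpen_basic (a : {a : Set ℕ // a ∈ 𝒜}) {F : Set ℕ} (hF : F.Finite) :
    IsOpen (insert (PsiSpace.pt a) (PsiSpace.nat '' ((a : Set ℕ) \ F))) :=
  TopologicalSpace.isOpen_generateFrom_of_mem (Or.inr ⟨a, F, hF, rfl⟩)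

lemma isOpen_singleton_nat (n : ℕ) : IsOpen ({PsiSpace.nat n} : Set (PsiSpace 𝒜)) :=
  TopologicalSpace.isOpen_generateFrom_of_mem (Or.inl ⟨n, rfl⟩)

lemma tendsto_nhds_pt {α : Type*} {l : Filter α} {u : α → PsiSpace 𝒜} {a : {a : Set ℕ // a ∈ 𝒜}}
    (h : ∀ F : Set ℕ, F.Finite →
      ∀ᶠ x in l, u x ∈ insert (PsiSpace.pt a) (PsiSpace.nat '' ((a : Set ℕ) \ F))) :
    Tendsto u l (𝓝 (PsiSpace.pt a)) := by
  have hn : (𝓝 (PsiSpace.pt a) : Filter (PsiSpace 𝒜)) =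
      ⨅ s ∈ {s | PsiSpace.pt a ∈ s ∧ s ∈ Gen 𝒜}, 𝓟 s :=
    TopologicalSpace.nhds_generateFrom
  rw [hn]
  refine tendsto_iInf.2 fun S => tendsto_iInf.2 fun hS => tendsto_principal.2 ?_
  obtain ⟨F, hF, rfl⟩ := pt_mem_gen hS.2 hS.1
  exact h F hF

lemma tendsto_nat_pt {u : ℕ → ℕ} {a : {a : Set ℕ // a ∈ 𝒜}}
    (hmem : ∀ j, u j ∈ (a : Set ℕ)) (hu : Tendsto u atTop atTop) :
    Tendsto (fun j => (PsiSpace.nat (u j) : PsiSpace 𝒜)) atTop (𝓝 (PsiSpace.pt a)) := by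
  apply tendsto_nhds_pt
  intro F hF
  obtain ⟨N, hN⟩ := hF.bddAbove
  filter_upwards [hu.eventually_ge_atTop (N + 1)] with j hj
  refine Or.inr ⟨u j, ⟨hmem j, fun hmemF => ?_⟩, rfl⟩
  exact absurd (hN hmemF) (by omega)

lemma exists_basic_subset {U : Set (PsiSpace 𝒜)} (hU : IsOpen U) {a : {a : Set ℕ // a ∈ 𝒜}}
    (ha : PsiSpace.pt a ∈ U) :
    ∃ F : Set ℕ, F.Finite ∧
      insert (PsiSpace.pt a) (PsiSpace.nat '' ((a : Set ℕ) \ F)) ⊆ U := by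
  have hU' : TopologicalSpace.GenerateOpen (Gen 𝒜) U := hU
  clear hU
  induction hU' with
  | basic S hS =>
    obtain ⟨F, hF, rfl⟩ := pt_mem_gen hS ha
    exact ⟨F, hF, subset_rfl⟩
  | univ => exact ⟨∅, finite_empty, subset_univ _⟩
  | inter s t hs ht ihs iht =>
    obtain ⟨F₁, hF₁, h₁⟩ := ihs ha.1
    obtain ⟨F₂, hF₂, h₂⟩ := iht ha.2
    refine ⟨F₁ ∪ F₂, hF₁.union hF₂, subset_inter ?_ ?_⟩
    · exact (insert_subset_insert (image_mono (diff_subset_diff_right subset_union_left))).trans h₁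
    · exact (insert_subset_insert (image_mono (diff_subset_diff_right subset_union_right))).trans h₂
  | sUnion S hS ih =>
    obtain ⟨s, hsS, has⟩ := ha
    obtain ⟨F, hF, h⟩ := ih s hsS has
    exact ⟨F, hF, h.trans (subset_sUnion_of_mem hsS)⟩

lemma dense_nat (h𝒜 : AlmostDisjointFamily 𝒜) {U : Set (PsiSpace 𝒜)} (hU : IsOpen U)
    (hne : U.Nonempty) : ∃ n, PsiSpace.nat n ∈ U := by
  obtain ⟨x, hx⟩ := hne
  rcases psi_cases x with ⟨n, rfl⟩ | ⟨a, rfl⟩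
  · exact ⟨n, hx⟩
  · obtain ⟨F, hF, hsub⟩ := exists_basic_subset hU hx
    obtain ⟨n, hn⟩ := ((h𝒜.2.1 a a.2).diff hF).nonempty
    exact ⟨n, hsub (Or.inr ⟨n, hn, rfl⟩)⟩

lemma exists_subseq (hmad : MadFamily 𝒜) (u : ℕ → ℕ) :
    ∃ s : ℕ → ℕ, StrictMono s ∧ ∃ y : PsiSpace 𝒜,
      Tendsto (fun j => (PsiSpace.nat (u (s j)) : PsiSpace 𝒜)) atTop (𝓝 y) := by
  by_cases hfib : ∃ v, {k | u k = v}.Infinite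
  · obtain ⟨v, hv⟩ := hfib
    refine ⟨Nat.nth (fun k => u k = v), Nat.nth_strictMono hv, PsiSpace.nat v, ?_⟩
    have hval : ∀ j, u (Nat.nth (fun k => u k = v) j) = v :=
      fun j => Nat.nth_mem_of_infinite hv j
    simp only [hval]
    exact tendsto_const_nhds
  · push_neg at hfib
    have hfin : ∀ v, {k | u k = v}.Finite := fun v => hfib v
    have htop : Tendsto u atTop atTop := by
      rw [tendsto_atTop]
      intro b
      have hcof : ∀ᶠ k in cofinite, b ≤ u k := by
        rw [eventually_cofinite]
        have hsub : {k | ¬ b ≤ u k} ⊆ ⋃ v ∈ Finset.range b, {k | u k = v} := by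
          intro k hk
          simp only [mem_iUnion, Finset.mem_range]
          simp only [mem_setOf_eq, not_le] at hk
          exact ⟨u k, hk, rfl⟩
        exact ((Finset.range b).finite_toSet.biUnion fun v _ => hfin v).subset hsub
      rwa [Nat.cofinite_eq_atTop] at hcof
    have hrange : (Set.range u).Infinite := by
      intro hfinr
      have : (Set.univ : Set ℕ).Finite := by
        refine Set.Finite.subset (hfinr.biUnion fun v _ => hfin v) ?_
        intro k _
        exact Set.mem_biUnion (Set.mem_range_self k) rfl
      exact Set.infinite_univ this
    obtain ⟨a, ha𝒜, hinter⟩ := hmad.2 _ hrange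
    have hS : {k | u k ∈ a}.Infinite := by
      intro hSfin
      refine hinter ?_
      refine (hSfin.image u).subset ?_
      rintro x ⟨⟨k, rfl⟩, hxa⟩
      exact ⟨k, hxa, rfl⟩
    refine ⟨Nat.nth (fun k => u k ∈ a), Nat.nth_strictMono hS, PsiSpace.pt ⟨a, ha𝒜⟩, ?_⟩
    exact tendsto_nat_pt (fun j => Nat.nth_mem_of_infinite hS j)
      (htop.comp (Nat.nth_strictMono hS).tendsto_atTop)

lemma diag (hmad : MadFamily 𝒜) (q : ℕ → ℕ → ℕ) :
    ∃ D : ℕ → ℕ, StrictMono D ∧ ∃ x : ℕ → PsiSpace 𝒜,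
      Tendsto (fun j => (fun i => (PsiSpace.nat (q (D j) i) : PsiSpace 𝒜)))
        atTop (𝓝 x) := by
  classical
  obtain ⟨ext, ext_mono, lim, ext_tendsto⟩ :
      ∃ (ext : (ℕ → ℕ) → (ℕ → ℕ)), (∀ u, StrictMono (ext u)) ∧
        ∃ (lim : (ℕ → ℕ) → PsiSpace 𝒜), ∀ u,
          Tendsto (fun j => (PsiSpace.nat (u (ext u j)) : PsiSpace 𝒜)) atTop (𝓝 (lim u)) := by
    choose ext hmono lim htend using exists_subseq hmad
    exact ⟨ext, hmono, lim, htend⟩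
  let T : ℕ → (ℕ → ℕ) := fun i => Nat.rec (ext fun k => q k 0)
      (fun i Ti => Ti ∘ ext (fun k => q (Ti k) (i + 1))) i
  have Tmono : ∀ i, StrictMono (T i) := by
    intro i; induction i with
    | zero => exact ext_mono _
    | succ i ih => exact ih.comp (ext_mono _)
  let y : ℕ → PsiSpace 𝒜 := fun i => Nat.rec (lim fun k => q k 0)
      (fun i _ => lim (fun k => q (T i k) (i + 1))) i
  have hy : ∀ i, Tendsto (fun k => (PsiSpace.nat (q (T i k) i) : PsiSpace 𝒜))
      atTop (𝓝 (y i)) := by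
    intro i
    cases i with
    | zero => exact ext_tendsto (fun k => q k 0)
    | succ i => exact ext_tendsto (fun k => q (T i k) (i + 1))
  have key : ∀ i j n, ∃ m, n ≤ m ∧ T (i + j) n = T i m := by
    intro i j
    induction j with
    | zero => exact fun n => ⟨n, le_refl n, rfl⟩
    | succ j ih =>
      intro n
      have h1 : T (i + (j + 1)) n
          = T (i + j) (ext (fun k => q (T (i + j) k) (i + j + 1)) n) := rfl
      obtain ⟨m, hm, he⟩ := ih (ext (fun k => q (T (i + j) k) (i + j + 1)) n)
      exact ⟨m, le_trans (ext_mono _).le_apply hm, by rw [h1, he]⟩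
  refine ⟨fun j => T j j, ?_, y, ?_⟩
  · refine strictMono_nat_of_lt_succ fun j => ?_
    have h1 : T (j + 1) (j + 1) = T j (ext (fun k => q (T j k) (j + 1)) (j + 1)) := rfl
    rw [h1]
    exact (Tmono j) (lt_of_lt_of_le (Nat.lt_succ_self j) (ext_mono _).le_apply)
  · rw [tendsto_pi_nhds]
    intro i
    have hkey : ∀ j, i ≤ j → ∃ m, j ≤ m ∧ T j j = T i m := by
      intro j hij
      obtain ⟨m, hm, he⟩ := key i (j - i) j
      rw [Nat.add_sub_cancel' hij] at he
      exact ⟨m, hm, he⟩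
    set M : ℕ → ℕ := fun j => if h : i ≤ j then (hkey j h).choose else 0 with hMdef
    have hM1 : ∀ j, i ≤ j → j ≤ M j ∧ T j j = T i (M j) := by
      intro j h
      simp only [hMdef, dif_pos h]
      exact (hkey j h).choose_spec
    have hMtop : Tendsto M atTop atTop :=
      tendsto_atTop_mono' atTop (eventually_atTop.2 ⟨i, fun j hj => (hM1 j hj).1⟩) tendsto_id
    refine Filter.Tendsto.congr' ?_ ((hy i).comp hMtop)
    filter_upwards [eventually_ge_atTop i] with j hj
    simp only [Function.comp_apply]
    rw [← (hM1 j hj).2]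

lemma continuousAt_of_constant {X : Type*} [TopologicalSpace X] {f : X → ℝ} {x : X}
    {U : Set X} (hU : IsOpen U) (hx : x ∈ U) (hconst : ∀ y ∈ U, f y = f x) :
    ContinuousAt f x :=
  ContinuousAt.congr continuousAt_const
    (by filter_upwards [hU.mem_nhds hx] with y hy using (hconst y hy).symm)

end PsiAux

open Filter Topology in
theorem stmt0 (𝒜 : Set (Set ℕ)) (h𝒜 : AlmostDisjointFamily 𝒜) :
    List.TFAE [MadFamily 𝒜,
      Pseudocompact (PsiSpace 𝒜),
      Pseudocompact (ℕ → PsiSpace 𝒜)] := by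
  classical
  tfae_have 1 → 3 := by
    intro hmad f hf
    by_contra hbd
    push_neg at hbd
    have hV : ∀ k : ℕ, ∃ p : ℕ → ℕ,
        (k : ℝ) < |f (fun i => PsiSpace.nat (p i))| := by
      intro k
      obtain ⟨z, hz⟩ := hbd k
      have hopen : IsOpen {w : ℕ → PsiSpace 𝒜 | (k : ℝ) < |f w|} :=
        isOpen_lt continuous_const hf.abs
      obtain ⟨I, W, hW, hsub⟩ := (isOpen_pi_iff.1 hopen) z hz
      have hch : ∀ i, ∃ n, i ∈ I → PsiSpace.nat n ∈ W i := by
        intro i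
        by_cases hi : i ∈ I
        · obtain ⟨n, hn⟩ := PsiAux.dense_nat h𝒜 (hW i hi).1 ⟨z i, (hW i hi).2⟩
          exact ⟨n, fun _ => hn⟩
        · exact ⟨0, fun h => absurd h hi⟩
      choose pp hpp using hch
      refine ⟨pp, ?_⟩
      apply hsub
      rw [Set.mem_pi]
      intro i hi
      exact hpp i hi
    choose p hp using hV
    obtain ⟨D, hD, x, hx⟩ := PsiAux.diag hmad p
    have hfx : Tendsto (fun j => f (fun i => PsiSpace.nat (p (D j) i)))
        atTop (𝓝 (f x)) := (hf.tendsto x).comp hx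
    have h1 : ∀ᶠ j in atTop,
        |f (fun i => PsiSpace.nat (p (D j) i))| ≤ |f x| + 1 :=
      hfx.abs.eventually (eventually_le_nhds (lt_add_one _))
    obtain ⟨N, hN⟩ := eventually_atTop.1 h1
    set j := max N (⌈|f x| + 1⌉₊ + 1) with hjdef
    have hj1 := hN j (le_max_left _ _)
    have hj2 : ((D j : ℕ) : ℝ) < |f (fun i => PsiSpace.nat (p (D j) i))| := hp (D j)
    have hj3 : (j : ℝ) ≤ ((D j : ℕ) : ℝ) := Nat.cast_le.2 hD.le_apply
    have hj4 : (⌈|f x| + 1⌉₊ + 1 : ℕ) ≤ j := le_max_right _ _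
    have h3 : |f x| + 1 ≤ (⌈|f x| + 1⌉₊ : ℝ) := Nat.le_ceil _
    have h4 : ((⌈|f x| + 1⌉₊ + 1 : ℕ) : ℝ) ≤ (j : ℝ) := Nat.cast_le.2 hj4
    push_cast at h4
    linarith
  tfae_have 3 → 2 := by
    intro h f hf
    obtain ⟨M, hM⟩ := h (fun w => f (w 0)) (hf.comp (continuous_apply 0))
    exact ⟨M, fun x => hM (fun _ => x)⟩
  tfae_have 2 → 1 := by
    intro h
    refine ⟨h𝒜, fun X hX => ?_⟩
    by_contra hno
    push_neg at hno
    set f : PsiSpace 𝒜 → ℝ :=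
      Sum.elim (fun n => if n ∈ X then (n : ℝ) else 0) (fun _ => 0) with hfdef
    have hfnat : ∀ n, f (PsiSpace.nat n) = if n ∈ X then (n : ℝ) else 0 := fun n => rfl
    have hfpt : ∀ a, f (PsiSpace.pt a) = 0 := fun a => rfl
    have hcont : Continuous f := by
      rw [continuous_iff_continuousAt]
      intro x
      rcases PsiAux.psi_cases x with ⟨n, rfl⟩ | ⟨a, rfl⟩
      · exact PsiAux.continuousAt_of_constant (PsiAux.isOpen_singleton_nat n) rfl
          (fun y hy => by rw [Set.mem_singleton_iff.1 hy])
      · refine PsiAux.continuousAt_of_constant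
          (PsiAux.isOpen_basic a (hno a a.2))
          (Set.mem_insert _ _) ?_
        rintro y (rfl | ⟨m, hm, rfl⟩)
        · rfl
        · rw [hfnat, hfpt, if_neg]
          intro hmX
          exact hm.2 ⟨hmX, hm.1⟩
    obtain ⟨M, hM⟩ := h f hcont
    obtain ⟨n, hnX, hn⟩ := hX.exists_gt (⌈max M 0⌉₊)
    have hb := hM (PsiSpace.nat n)
    rw [hfnat, if_pos hnX] at hb
    have h1 : (n : ℝ) ≤ M := le_trans (le_abs_self _) hb
    have h2 : M ≤ (⌈max M 0⌉₊ : ℝ) := le_trans (le_max_left _ _) (Nat.le_ceil _)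
    have h3 : ((⌈max M 0⌉₊ : ℕ) : ℝ) < (n : ℝ) := Nat.cast_lt.2 hn
    linarith
  tfae_finish
end

section
/- Assume CH (𝔠 = ℵ₁). Then there exist a MAD family 𝒜 on ℕ and a fin sequence C such that for every infinite set I ⊆ ℕ there are b, c ∈ 𝒜 for which the sets {n ∈ I : C(n) ∩ b ≠ ∅} and {n ∈ I : C(n) ∩ c ≠ ∅} are both infinite and disjoint from one another; in particular, 𝒜 is not fin-intersecting. -/
open Set

/-- A fin sequence: a function ℕ → [ℕ]^{<ω} \ {∅} with pairwise disjoint values. -/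
def FinSeq (C : ℕ → Finset ℕ) : Prop :=
  (∀ n, (C n).Nonempty) ∧ ∀ n m, n ≠ m → Disjoint (C n) (C m)

/-- A family of subsets of ℕ is centered if every finite subfamily has infinite
intersection. -/
def Centered (𝒮 : Set (Set ℕ)) : Prop :=
  ∀ T : Set (Set ℕ), T ⊆ 𝒮 → T.Finite → (⋂₀ T).Infinite

/-- The set {n ∈ I : a ∩ C(n) ≠ ∅}. -/
def meetSet (C : ℕ → Finset ℕ) (I : Set ℕ) (a : Set ℕ) : Set ℕ :=
  {n : ℕ | n ∈ I ∧ ∃ k ∈ C n, k ∈ a}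

/-- 𝒜 is fin-intersecting: for every fin sequence C there is an infinite I ⊆ ℕ such that
{{n ∈ I : a ∩ C(n) ≠ ∅} : a ∈ 𝒜} \ [I]^{<ω} is centered. -/
def FinIntersecting (𝒜 : Set (Set ℕ)) : Prop :=
  ∀ C : ℕ → Finset ℕ, FinSeq C →
    ∃ I : Set ℕ, I.Infinite ∧
      Centered ({S : Set ℕ | ∃ a ∈ 𝒜, S = meetSet C I a} \ {S : Set ℕ | S ⊆ I ∧ S.Finite})


namespace Stmt3Aux
open Cardinal Ordinal

def blk (n : ℕ) : Finset ℕ := Finset.Ico (2^n) (2^n + n + 1)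

lemma blk_card (n : ℕ) : (blk n).card = n + 1 := by
  rw [blk, Nat.card_Ico]; omega

lemma blk_nonempty (n : ℕ) : (blk n).Nonempty := by
  rw [← Finset.card_pos, blk_card]; omega

lemma blk_upper {m n : ℕ} (h : m < n) : 2^m + m + 1 ≤ 2^n := by
  have h1 : m + 1 ≤ 2^m := Nat.succ_le_of_lt (Nat.lt_two_pow_self (n := m))
  have h2 : 2^m * 2 ≤ 2^n := by
    have : 2^(m+1) ≤ 2^n := Nat.pow_le_pow_right (by norm_num) h
    simpa [pow_succ] using this
  omega

lemma blk_disj {m n : ℕ} (h : m ≠ n) : Disjoint (blk m) (blk n) := by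
  wlog hlt : m < n generalizing m n
  · exact (this h.symm (by omega)).symm
  · rw [Finset.disjoint_left]
    intro k hk hk'
    simp only [blk, Finset.mem_Ico] at hk hk'
    have := blk_upper hlt
    omega

lemma blk_eq_of_mem {k m n : ℕ} (h1 : k ∈ blk m) (h2 : k ∈ blk n) : m = n := by
  by_contra h
  exact (Finset.disjoint_left.mp (blk_disj h) h1) h2

/-- The set of indices of blocks met by `a`. -/
def Dset (a : Set ℕ) : Set ℕ := {n | ∃ k ∈ blk n, k ∈ a}

/-- A partial transversal of the blocks. -/
def Trans (p : Set ℕ) : Prop :=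
  (∀ n : ℕ, ((blk n : Set ℕ) ∩ p).Subsingleton) ∧ p ⊆ ⋃ n : ℕ, (blk n : Set ℕ)

lemma trans_empty : Trans (∅ : Set ℕ) := by
  constructor
  · intro n x hx; exact absurd hx.2 (by simp)
  · simp

lemma disjoint_of_dset {a b : Set ℕ} (ha : Trans a) (h : Disjoint (Dset a) (Dset b)) :
    Disjoint a b := by
  rw [Set.disjoint_left]
  intro k hka hkb
  obtain ⟨_, ⟨m, rfl⟩, hkm⟩ := ha.2 hka
  exact (Set.disjoint_left.mp h ⟨k, by exact_mod_cast hkm, hka⟩) ⟨k, by exact_mod_cast hkm, hkb⟩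

lemma exists_trans (P : Set (Set ℕ)) (hc : P.Countable) (htr : ∀ p ∈ P, Trans p)
    (J : Set ℕ) (hJ : J.Infinite) :
    ∃ b : Set ℕ, b.Infinite ∧ Trans b ∧ (∀ p ∈ P, (b ∩ p).Finite) ∧
      Dset b ⊆ J ∧ (Dset b).Infinite := by
  obtain ⟨e, he⟩ : ∃ f : ℕ → Set ℕ, insert (∅ : Set ℕ) P = Set.range f :=
    (hc.insert ∅).exists_eq_range (insert_nonempty _ _)
  have etr : ∀ i, Trans (e i) := by
    intro i
    have : e i ∈ insert (∅ : Set ℕ) P := he ▸ mem_range_self i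
    rcases this with h | h
    · exact h ▸ trans_empty
    · exact htr _ h
  have hJ' : {x | x ∈ J}.Infinite := hJ
  set n : ℕ → ℕ := Nat.nth (· ∈ J) with hn
  have nmono : StrictMono n := Nat.nth_strictMono hJ'
  have nmem : ∀ j, n j ∈ J := fun j => Nat.nth_mem_of_infinite hJ' j
  have nge : ∀ j, j ≤ n j := fun j => nmono.le_apply
  have key : ∀ j : ℕ, ∃ k ∈ blk (n j), ∀ i < j, k ∉ e i := by
    intro j
    by_contra hcon
    push_neg at hcon
    have hcon' : ∀ k ∈ blk (n j), ∃ i, i < j ∧ k ∈ e i := by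
      intro k hk; obtain ⟨i, hi, hk'⟩ := hcon k hk; exact ⟨i, hi, hk'⟩
    classical
    set f : ℕ → ℕ := fun k => if h : k ∈ blk (n j) then (hcon' k h).choose else 0 with hf
    have hmaps : ∀ k ∈ blk (n j), f k ∈ Finset.range j := by
      intro k hk
      simp only [hf, dif_pos hk, Finset.mem_range]
      exact (hcon' k hk).choose_spec.1
    have hinj : Set.InjOn f (blk (n j) : Set ℕ) := by
      intro k₁ hk₁ k₂ hk₂ heq
      simp only [Finset.mem_coe] at hk₁ hk₂
      rw [hf] at heq
      simp only [dif_pos hk₁, dif_pos hk₂] at heq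
      have h₁ := (hcon' k₁ hk₁).choose_spec.2
      have h₂ := (hcon' k₂ hk₂).choose_spec.2
      rw [heq] at h₁
      exact (etr _).1 (n j) ⟨by exact_mod_cast hk₁, h₁⟩ ⟨by exact_mod_cast hk₂, h₂⟩
    have hcard := Finset.card_le_card_of_injOn f hmaps hinj
    rw [blk_card, Finset.card_range] at hcard
    have := nge j
    omega
  choose s hs1 hs2 using key
  have sinj : Function.Injective s := by
    intro a a' heq
    by_contra hne
    have hne' : n a ≠ n a' := fun h => hne (nmono.injective h)
    exact (Finset.disjoint_left.mp (blk_disj hne') (hs1 a)) (heq ▸ hs1 a')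
  refine ⟨Set.range s, infinite_range_of_injective sinj, ⟨?_, ?_⟩, ?_, ?_, ?_⟩
  · rintro m x ⟨hxb, j, rfl⟩ y ⟨hyb, j', rfl⟩
    have h1 : m = n j := blk_eq_of_mem (by exact_mod_cast hxb) (hs1 j)
    have h2 : m = n j' := blk_eq_of_mem (by exact_mod_cast hyb) (hs1 j')
    have : j = j' := nmono.injective (h1 ▸ h2)
    rw [this]
  · rintro x ⟨j, rfl⟩
    exact mem_iUnion.mpr ⟨n j, by exact_mod_cast hs1 j⟩
  · intro p hp
    have : p ∈ Set.range e := he ▸ mem_insert_of_mem _ hp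
    obtain ⟨i, rfl⟩ := this
    apply Set.Finite.subset (Set.Finite.image s (Set.finite_Iic i))
    rintro x ⟨⟨j, rfl⟩, hxp⟩
    refine ⟨j, ?_, rfl⟩
    by_contra hji
    exact hs2 j i (by simpa using hji) hxp
  · rintro m ⟨k, hkb, j, rfl⟩
    have : m = n j := blk_eq_of_mem hkb (hs1 j)
    exact this ▸ nmem j
  · apply Set.Infinite.mono (s := Set.range n)
    · rintro m ⟨j, rfl⟩
      exact ⟨s j, hs1 j, mem_range_self j⟩
    · exact infinite_range_of_injective nmono.injective

lemma exists_split {I : Set ℕ} (hI : I.Infinite) :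
    ∃ J₀ J₁ : Set ℕ, J₀ ⊆ I ∧ J₁ ⊆ I ∧ J₀.Infinite ∧ J₁.Infinite ∧ Disjoint J₀ J₁ := by
  have hI' : {x | x ∈ I}.Infinite := hI
  set n : ℕ → ℕ := Nat.nth (· ∈ I) with hn
  have nmono : StrictMono n := Nat.nth_strictMono hI'
  have nmem : ∀ j, n j ∈ I := fun j => Nat.nth_mem_of_infinite hI' j
  refine ⟨Set.range (fun k => n (2*k)), Set.range (fun k => n (2*k+1)), ?_, ?_, ?_, ?_, ?_⟩
  · rintro x ⟨k, rfl⟩; exact nmem _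
  · rintro x ⟨k, rfl⟩; exact nmem _
  · exact infinite_range_of_injective (fun a b h => by
      have := nmono.injective h; omega)
  · exact infinite_range_of_injective (fun a b h => by
      have := nmono.injective h; omega)
  · rw [Set.disjoint_left]
    rintro x ⟨k, rfl⟩ ⟨k', hk'⟩
    have := nmono.injective hk'.symm
    omega

def GoodPair (P : Set (Set ℕ)) (I : Set ℕ) (bc : Set ℕ × Set ℕ) : Prop :=
  bc.1.Infinite ∧ bc.2.Infinite ∧ Trans bc.1 ∧ Trans bc.2 ∧
  (∀ p ∈ P, Trans p → (bc.1 ∩ p).Finite ∧ (bc.2 ∩ p).Finite) ∧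
  Dset bc.1 ⊆ I ∧ Dset bc.2 ⊆ I ∧ (Dset bc.1).Infinite ∧ (Dset bc.2).Infinite ∧
  Disjoint (Dset bc.1) (Dset bc.2)

lemma exists_goodPair (P : Set (Set ℕ)) (hc : P.Countable) (I : Set ℕ) (hI : I.Infinite) :
    ∃ bc : Set ℕ × Set ℕ, GoodPair P I bc := by
  set Pt : Set (Set ℕ) := {p ∈ P | Trans p} with hPt
  have hPtc : Pt.Countable := hc.mono (sep_subset _ _)
  have hPttr : ∀ p ∈ Pt, Trans p := fun p hp => hp.2
  obtain ⟨J₀, J₁, hJ₀I, hJ₁I, hJ₀, hJ₁, hdisj⟩ := exists_split hI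
  obtain ⟨b, hb1, hb2, hb3, hb4, hb5⟩ := exists_trans Pt hPtc hPttr J₀ hJ₀
  obtain ⟨c, hc1, hc2, hc3, hc4, hc5⟩ := exists_trans Pt hPtc hPttr J₁ hJ₁
  refine ⟨(b, c), hb1, hc1, hb2, hc2, ?_, hb4.trans hJ₀I, hc4.trans hJ₁I, hb5, hc5, ?_⟩
  · intro p hp htr
    exact ⟨hb3 p ⟨hp, htr⟩, hc3 p ⟨hp, htr⟩⟩
  · exact Set.disjoint_of_subset hb4 hc4 hdisj

/-- The type of infinite subsets of ℕ. -/
abbrev TI := {I : Set ℕ // I.Infinite}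

instance : Infinite TI := by
  apply Infinite.of_injective (fun n : ℕ => (⟨Set.Ici n, Set.Ici_infinite n⟩ : TI))
  intro a b h
  have h' : Set.Ici a = Set.Ici b := congrArg Subtype.val h
  have ha : a ∈ Set.Ici b := h' ▸ Set.self_mem_Ici
  have hb : b ∈ Set.Ici a := h'.symm ▸ Set.self_mem_Ici
  exact le_antisymm hb ha

lemma priors_countable (r : TI → TI → Prop) (x : TI) (hx : {y | r y x}.Countable)
    (g : ∀ y, r y x → Set ℕ × Set ℕ) :
    {p | ∃ y, ∃ h : r y x, p = (g y h).1 ∨ p = (g y h).2}.Countable := by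
  haveI := hx.to_subtype
  apply Set.Countable.mono (s₂ :=
    Set.range (fun z : {y | r y x} => (g z.1 z.2).1) ∪
    Set.range (fun z : {y | r y x} => (g z.1 z.2).2))
  · rintro p ⟨y, h, hp | hp⟩
    · exact Or.inl ⟨⟨y, h⟩, hp.symm⟩
    · exact Or.inr ⟨⟨y, h⟩, hp.symm⟩
  · exact (countable_range _).union (countable_range _)

noncomputable def step (r : TI → TI → Prop) (hcnt : ∀ x : TI, {y | r y x}.Countable)
    (x : TI) (g : ∀ y, r y x → Set ℕ × Set ℕ) : Set ℕ × Set ℕ :=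
  (exists_goodPair _ (priors_countable r x (hcnt x) g) x.1 x.2).choose

noncomputable def fam (r : TI → TI → Prop) (wf : WellFounded r)
    (hcnt : ∀ x : TI, {y | r y x}.Countable) : TI → Set ℕ × Set ℕ :=
  wf.fix (step r hcnt)

lemma fam_good (r : TI → TI → Prop) (wf : WellFounded r)
    (hcnt : ∀ x : TI, {y | r y x}.Countable) (x : TI) :
    GoodPair {p | ∃ y, ∃ _h : r y x,
        p = (fam r wf hcnt y).1 ∨ p = (fam r wf hcnt y).2} x.1 (fam r wf hcnt x) := by
  have heq : fam r wf hcnt x = step r hcnt x (fun y _ => fam r wf hcnt y) :=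
    wf.fix_eq (step r hcnt) x
  rw [heq]
  exact (exists_goodPair _ (priors_countable r x (hcnt x) _) x.1 x.2).choose_spec

lemma CH_down.{u} (h : Cardinal.continuum.{u} = Cardinal.aleph.{u} 1) :
    Cardinal.continuum.{0} = Cardinal.aleph.{0} 1 := by
  apply Cardinal.lift_inj.{0,u}.mp
  rw [Cardinal.lift_continuum, Cardinal.lift_aleph, Ordinal.lift_one]
  exact h

lemma exists_family (hCH : Cardinal.continuum.{0} = Cardinal.aleph.{0} 1) :
    ∃ 𝒜₀ : Set (Set ℕ), 𝒜₀.Infinite ∧ (∀ a ∈ 𝒜₀, a.Infinite) ∧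
      (∀ a ∈ 𝒜₀, ∀ b ∈ 𝒜₀, a ≠ b → (a ∩ b).Finite) ∧
      (∀ I : Set ℕ, I.Infinite → ∃ b ∈ 𝒜₀, ∃ c ∈ 𝒜₀,
        Dset b ⊆ I ∧ Dset c ⊆ I ∧ (Dset b).Infinite ∧ (Dset c).Infinite ∧
        Disjoint (Dset b) (Dset c)) := by
  have hle : (#TI) ≤ Cardinal.aleph 1 := by
    calc (#TI) ≤ #(Set ℕ) := Cardinal.mk_set_le {I : Set ℕ | I.Infinite}
    _ = Cardinal.continuum := Cardinal.mk_set_nat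
    _ = Cardinal.aleph 1 := hCH
  obtain ⟨r, wo, hr⟩ := Cardinal.ord_eq TI
  haveI := wo
  have hcnt : ∀ x : TI, {y | r y x}.Countable := by
    intro x
    rw [Cardinal.countable_iff_lt_aleph_one]
    calc #{y | r y x} = (Ordinal.typein r x).card := Ordinal.card_typein x
    _ < #TI := Cardinal.card_typein_lt (r := r) x hr
    _ ≤ Cardinal.aleph 1 := hle
  have wf : WellFounded r := wo.toIsWellFounded.wf
  set f : TI → Set ℕ × Set ℕ := fam r wf hcnt with hfdef
  have hGood := fam_good r wf hcnt
  have htr1 : ∀ x : TI, Trans (f x).1 := fun x => (hGood x).2.2.1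
  have htr2 : ∀ x : TI, Trans (f x).2 := fun x => (hGood x).2.2.2.1
  have hinf1 : ∀ x : TI, (f x).1.Infinite := fun x => (hGood x).1
  have hAD : ∀ x y : TI, r y x → ∀ a, (a = (f x).1 ∨ a = (f x).2) →
      ∀ b, (b = (f y).1 ∨ b = (f y).2) → (a ∩ b).Finite := by
    intro x y hryx a ha b hb
    have had := (hGood x).2.2.2.2.1
    have hbtr : Trans b := by rcases hb with rfl | rfl; exacts [htr1 y, htr2 y]
    have hbp : b ∈ {p | ∃ z, ∃ _h : r z x, p = (f z).1 ∨ p = (f z).2} := ⟨y, hryx, hb⟩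
    rcases ha with rfl | rfl
    · exact (had b hbp hbtr).1
    · exact (had b hbp hbtr).2
  refine ⟨{a | ∃ x : TI, a = (f x).1 ∨ a = (f x).2}, ?_, ?_, ?_, ?_⟩
  · -- infinite
    have hinj : Function.Injective (fun x : TI => (f x).1) := by
      intro x y hxy
      have hxy' : (f x).1 = (f y).1 := hxy
      by_contra hne
      rcases trichotomous_of r x y with h | h | h
      · have := hAD y x h (f y).1 (Or.inl rfl) (f x).1 (Or.inl rfl)
        rw [← hxy', Set.inter_self] at this
        exact hinf1 x this
      · exact hne h
      · have := hAD x y h (f x).1 (Or.inl rfl) (f y).1 (Or.inl rfl)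
        rw [hxy', Set.inter_self] at this
        exact hinf1 y this
    exact infinite_of_injective_forall_mem hinj (fun x => ⟨x, Or.inl rfl⟩)
  · -- all members infinite
    rintro a ⟨x, rfl | rfl⟩
    · exact (hGood x).1
    · exact (hGood x).2.1
  · -- almost disjoint
    rintro a ⟨x, hax⟩ b ⟨y, hby⟩ hne
    rcases trichotomous_of r x y with h | h | h
    · rw [Set.inter_comm]
      exact hAD y x h b hby a hax
    · subst h
      rcases hax with rfl | rfl <;> rcases hby with rfl | rfl
      · exact absurd rfl hne
      · have : Disjoint (f x).1 (f x).2 :=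
          disjoint_of_dset (htr1 x) (hGood x).2.2.2.2.2.2.2.2.2
        rw [Set.disjoint_iff_inter_eq_empty.mp this]
        exact finite_empty
      · have : Disjoint (f x).1 (f x).2 :=
          disjoint_of_dset (htr1 x) (hGood x).2.2.2.2.2.2.2.2.2
        rw [Set.inter_comm, Set.disjoint_iff_inter_eq_empty.mp this]
        exact finite_empty
      · exact absurd rfl hne
    · exact hAD x y h a hax b hby
  · -- the diagonal property
    intro I hI
    set x : TI := ⟨I, hI⟩ with hx
    have hg := hGood x
    exact ⟨(f x).1, ⟨x, Or.inl rfl⟩, (f x).2, ⟨x, Or.inr rfl⟩,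
      hg.2.2.2.2.2.1, hg.2.2.2.2.2.2.1, hg.2.2.2.2.2.2.2.1,
      hg.2.2.2.2.2.2.2.2.1, hg.2.2.2.2.2.2.2.2.2⟩

end Stmt3Aux

lemma Stmt3Aux.exists_mad (𝒜₀ : Set (Set ℕ)) (h0 : 𝒜₀.Infinite)
    (h1 : ∀ a ∈ 𝒜₀, a.Infinite)
    (h2 : ∀ a ∈ 𝒜₀, ∀ b ∈ 𝒜₀, a ≠ b → (a ∩ b).Finite) :
    ∃ 𝒜, 𝒜₀ ⊆ 𝒜 ∧ MadFamily 𝒜 := by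
  set S : Set (Set (Set ℕ)) := {ℬ | 𝒜₀ ⊆ ℬ ∧ (∀ a ∈ ℬ, a.Infinite) ∧
    ∀ a ∈ ℬ, ∀ b ∈ ℬ, a ≠ b → (a ∩ b).Finite} with hS
  have hchain : ∀ c ⊆ S, IsChain (· ⊆ ·) c → c.Nonempty →
      ∃ ub ∈ S, ∀ s ∈ c, s ⊆ ub := by
    intro c hcS hchain hcne
    refine ⟨⋃₀ c, ⟨?_, ?_, ?_⟩, fun s hs => subset_sUnion_of_mem hs⟩
    · obtain ⟨ℬ, hℬ⟩ := hcne
      exact (hcS hℬ).1.trans (subset_sUnion_of_mem hℬ)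
    · rintro a ⟨ℬ, hℬ, ha⟩
      exact (hcS hℬ).2.1 a ha
    · rintro a ⟨ℬ₁, h₁, ha⟩ b ⟨ℬ₂, h₂, hb⟩ hne
      rcases hchain.total h₁ h₂ with h | h
      · exact (hcS h₂).2.2 a (h ha) b hb hne
      · exact (hcS h₁).2.2 a ha b (h hb) hne
  obtain ⟨M, hsub, hmax⟩ := zorn_subset_nonempty S hchain 𝒜₀ ⟨Subset.rfl, h1, h2⟩
  have hMS := hmax.1
  refine ⟨M, hsub, ⟨⟨h0.mono hsub, hMS.2.1, hMS.2.2⟩, ?_⟩⟩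
  intro X hX
  by_contra hcon
  push_neg at hcon
  have hfin : ∀ a ∈ M, (X ∩ a).Finite := fun a ha => hcon a ha
  have hXM : insert X M ∈ S := by
    refine ⟨hsub.trans (Set.subset_insert _ _), ?_, ?_⟩
    · intro a ha
      rcases ha with rfl | ha
      · exact hX
      · exact hMS.2.1 a ha
    · intro a ha b hb hne
      rcases ha with rfl | ha <;> rcases hb with rfl | hb
      · exact absurd rfl hne
      · exact hfin b hb
      · rw [Set.inter_comm]; exact hfin a ha
      · exact hMS.2.2 a ha b hb hne
  have hins : insert X M ⊆ M := hmax.2 hXM (Set.subset_insert _ _)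
  have hXmem : X ∈ M := hins (Set.mem_insert _ _)
  have := hfin X hXmem
  rw [Set.inter_self] at this
  exact hX this

theorem stmt3 (hCH : Cardinal.continuum = Cardinal.aleph 1) :
    ∃ (𝒜 : Set (Set ℕ)) (C : ℕ → Finset ℕ), MadFamily 𝒜 ∧ FinSeq C ∧
      (∀ I : Set ℕ, I.Infinite → ∃ b ∈ 𝒜, ∃ c ∈ 𝒜,
        (meetSet C I b).Infinite ∧ (meetSet C I c).Infinite ∧
        Disjoint (meetSet C I b) (meetSet C I c)) ∧
      ¬ FinIntersecting 𝒜 := by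
  obtain ⟨𝒜₀, h0, h1, h2, hprop⟩ := Stmt3Aux.exists_family (Stmt3Aux.CH_down hCH)
  obtain ⟨𝒜, hsub, hmad⟩ := Stmt3Aux.exists_mad 𝒜₀ h0 h1 h2
  have hFS : FinSeq Stmt3Aux.blk :=
    ⟨Stmt3Aux.blk_nonempty, fun n m h => Stmt3Aux.blk_disj h⟩
  have hmeet : ∀ (I : Set ℕ) (a : Set ℕ), Stmt3Aux.Dset a ⊆ I →
      meetSet Stmt3Aux.blk I a = Stmt3Aux.Dset a := by
    intro I a hD
    ext n
    constructor
    · rintro ⟨_, hk⟩; exact hk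
    · intro hk; exact ⟨hD hk, hk⟩
  have hkey : ∀ I : Set ℕ, I.Infinite → ∃ b ∈ 𝒜, ∃ c ∈ 𝒜,
      (meetSet Stmt3Aux.blk I b).Infinite ∧ (meetSet Stmt3Aux.blk I c).Infinite ∧
      Disjoint (meetSet Stmt3Aux.blk I b) (meetSet Stmt3Aux.blk I c) := by
    intro I hI
    obtain ⟨b, hb, c, hc, hbD, hcD, hbInf, hcInf, hdisj⟩ := hprop I hI
    refine ⟨b, hsub hb, c, hsub hc, ?_, ?_, ?_⟩
    · rw [hmeet I b hbD]; exact hbInf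
    · rw [hmeet I c hcD]; exact hcInf
    · rw [hmeet I b hbD, hmeet I c hcD]; exact hdisj
  refine ⟨𝒜, Stmt3Aux.blk, hmad, hFS, hkey, ?_⟩
  intro hFI
  obtain ⟨I, hI, hcen⟩ := hFI Stmt3Aux.blk hFS
  obtain ⟨b, hb, c, hc, hbInf, hcInf, hdisj⟩ := hkey I hI
  set S₁ := meetSet Stmt3Aux.blk I b with hS₁
  set S₂ := meetSet Stmt3Aux.blk I c with hS₂
  have hsubT : {S₁, S₂} ⊆
      ({S : Set ℕ | ∃ a ∈ 𝒜, S = meetSet Stmt3Aux.blk I a} \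
        {S : Set ℕ | S ⊆ I ∧ S.Finite}) := by
    intro s hs
    rcases hs with rfl | hs
    · exact ⟨⟨b, hb, rfl⟩, fun h => hbInf h.2⟩
    · rw [Set.mem_singleton_iff] at hs
      subst hs
      exact ⟨⟨c, hc, rfl⟩, fun h => hcInf h.2⟩
  have hinter := hcen {S₁, S₂} hsubT
    ((Set.finite_singleton S₂).insert S₁)
  rw [Set.sInter_pair, Set.disjoint_iff_inter_eq_empty.mp hdisj] at hinter
  exact hinter Set.finite_empty
end

section
/- Let A be a set of free ultrafilters on ℕ and let 𝒜 be an almost disjoint family on ℕ. The following are equivalent: (i) exp(Ψ(𝒜)) is p-pseudocompact for some p ∈ A; (ii) Ψ(𝒜) is p-pseudocompact for some p ∈ A; (iii) Ψ(𝒜) is (𝔠, A)-pseudocompact. -/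
open Set

/-- The Vietoris hyperspace: nonempty closed subsets of X. -/
def Hyperspace (X : Type*) [TopologicalSpace X] : Type _ :=
  {F : Set X // F.Nonempty ∧ IsClosed F}

/-- The Vietoris topology, generated by the sets U⁺ and U⁻ for U open. -/
instance (X : Type*) [TopologicalSpace X] : TopologicalSpace (Hyperspace X) :=
  TopologicalSpace.generateFrom
    ({S | ∃ U : Set X, IsOpen U ∧ S = {F : Hyperspace X | F.1 ⊆ U}} ∪
      {S | ∃ U : Set X, IsOpen U ∧ S = {F : Hyperspace X | (F.1 ∩ U).Nonempty}})

/-- A free (nonprincipal) ultrafilter on ℕ. -/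
def IsFree (p : Ultrafilter ℕ) : Prop := (p : Filter ℕ) ≤ Filter.cofinite

/-- x is a p-limit of the sequence (U n) of sets: every open neighbourhood of x
meets U n for p-many n. -/
def IsPLimit {X : Type*} [TopologicalSpace X] (p : Ultrafilter ℕ) (U : ℕ → Set X)
    (x : X) : Prop :=
  ∀ V : Set X, IsOpen V → x ∈ V → {n : ℕ | (U n ∩ V).Nonempty} ∈ p

/-- X is p-pseudocompact: every sequence of nonempty open subsets has a p-limit. -/
def PPseudocompact (X : Type*) [TopologicalSpace X] (p : Ultrafilter ℕ) : Prop :=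
  ∀ U : ℕ → Set X, (∀ n, IsOpen (U n) ∧ (U n).Nonempty) → ∃ x : X, IsPLimit p U x

/-- X is (κ, A)-pseudocompact: for every κ-indexed family of sequences of nonempty open
sets there is p ∈ A such that each sequence has a p-limit. -/
def KAPseudocompact (X : Type*) [TopologicalSpace X] (κ : Cardinal.{0})
    (A : Set (Ultrafilter ℕ)) : Prop :=
  ∀ (ι : Type) (_ : Cardinal.mk ι = κ) (U : ι → ℕ → Set X),
    (∀ i n, IsOpen (U i n) ∧ (U i n).Nonempty) →
    ∃ p ∈ A, ∀ i, ∃ x : X, IsPLimit p (U i) x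


section Aux
variable {𝒜 : Set (Set ℕ)}

lemma psi_isOpen_nat (n : ℕ) : IsOpen ({PsiSpace.nat n} : Set (PsiSpace 𝒜)) :=
  TopologicalSpace.GenerateOpen.basic _ (Or.inl ⟨n, rfl⟩)

lemma psi_isOpen_pt (a : {a : Set ℕ // a ∈ 𝒜}) {F : Set ℕ} (hF : F.Finite) :
    IsOpen (insert (PsiSpace.pt a) (PsiSpace.nat '' ((a : Set ℕ) \ F))) :=
  TopologicalSpace.GenerateOpen.basic _ (Or.inr ⟨a, F, hF, rfl⟩)

lemma pt_ne_nat (a : {a : Set ℕ // a ∈ 𝒜}) (n : ℕ) : PsiSpace.pt a ≠ PsiSpace.nat n := by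
  intro h; cases h

lemma nat_inj : Function.Injective (PsiSpace.nat (𝒜 := 𝒜)) := fun a b h => Sum.inl.inj h

lemma pt_inj : Function.Injective (PsiSpace.pt (𝒜 := 𝒜)) := fun a b h => Sum.inr.inj h

lemma psi_nbhd_pt {U : Set (PsiSpace 𝒜)} (hU : IsOpen U) :
    ∀ a, PsiSpace.pt a ∈ U →
      ∃ F : Set ℕ, F.Finite ∧ insert (PsiSpace.pt a) (PsiSpace.nat '' ((a : Set ℕ) \ F)) ⊆ U := by
  have h : TopologicalSpace.GenerateOpen _ U := hU
  clear hU
  induction h with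
  | basic s hs =>
    intro a ha
    rcases hs with ⟨n, rfl⟩ | ⟨b, F, hF, rfl⟩
    · exact absurd ha (pt_ne_nat a n)
    · have hab : a = b := by
        rcases Set.mem_insert_iff.1 ha with h | ⟨m, _, h⟩
        · exact pt_inj h
        · exact absurd h.symm (pt_ne_nat a m)
      subst hab
      exact ⟨F, hF, subset_rfl⟩
  | univ => exact fun a _ => ⟨∅, finite_empty, subset_univ _⟩
  | inter u v _ _ ihu ihv =>
    intro a ha
    obtain ⟨F1, hF1, h1⟩ := ihu a ha.1
    obtain ⟨F2, hF2, h2⟩ := ihv a ha.2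
    refine ⟨F1 ∪ F2, hF1.union hF2, fun x hx => ?_⟩
    rcases Set.mem_insert_iff.1 hx with rfl | ⟨m, hm, rfl⟩
    · exact ⟨h1 (Set.mem_insert _ _), h2 (Set.mem_insert _ _)⟩
    · exact ⟨h1 (Set.mem_insert_iff.2 (Or.inr ⟨m, ⟨hm.1, fun hc => hm.2 (Or.inl hc)⟩, rfl⟩)),
        h2 (Set.mem_insert_iff.2 (Or.inr ⟨m, ⟨hm.1, fun hc => hm.2 (Or.inr hc)⟩, rfl⟩))⟩
  | sUnion S _ ih =>
    intro a ha
    obtain ⟨t, htS, hat⟩ := ha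
    obtain ⟨F, hF, h⟩ := ih t htS a hat
    exact ⟨F, hF, h.trans (subset_sUnion_of_mem htS)⟩

lemma psi_exists_nat_mem (h𝒜 : ∀ a ∈ 𝒜, Set.Infinite a) {U : Set (PsiSpace 𝒜)}
    (hU : IsOpen U) (hne : U.Nonempty) : ∃ m, PsiSpace.nat m ∈ U := by
  obtain ⟨x, hx⟩ := hne
  cases x with
  | inl m => exact ⟨m, hx⟩
  | inr a =>
    obtain ⟨F, hF, hsub⟩ := psi_nbhd_pt hU a hx
    obtain ⟨m, hm⟩ := ((h𝒜 a a.2).diff hF).nonempty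
    exact ⟨m, hsub (Set.mem_insert_iff.2 (Or.inr ⟨m, hm, rfl⟩))⟩

instance : T1Space (PsiSpace 𝒜) := by
  constructor
  intro x
  rw [← isOpen_compl_iff, isOpen_iff_forall_mem_open]
  intro y hy
  cases y with
  | inl m =>
    exact ⟨{PsiSpace.nat m}, Set.singleton_subset_iff.2 hy, psi_isOpen_nat m, rfl⟩
  | inr a =>
    cases x with
    | inl k =>
      refine ⟨insert (PsiSpace.pt a) (PsiSpace.nat '' ((a : Set ℕ) \ {k})),
        ?_, psi_isOpen_pt a (finite_singleton k), Set.mem_insert _ _⟩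
      rintro z hz
      rcases Set.mem_insert_iff.1 hz with rfl | ⟨m, hm, rfl⟩
      · exact pt_ne_nat a k
      · exact fun hc => hm.2 (nat_inj hc)
    | inr b =>
      have hab : a ≠ b := fun h => hy (by rw [h]; rfl)
      refine ⟨insert (PsiSpace.pt a) (PsiSpace.nat '' ((a : Set ℕ) \ ∅)),
        ?_, psi_isOpen_pt a finite_empty, Set.mem_insert _ _⟩
      rintro z hz
      rcases Set.mem_insert_iff.1 hz with rfl | ⟨m, _, rfl⟩
      · exact fun hc => hab (pt_inj hc)
      · exact fun hc => pt_ne_nat b m hc.symm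

end Aux

section Hyper
open TopologicalSpace
variable {X : Type*} [TopologicalSpace X]

lemma hyper_isOpen_plus {U : Set X} (hU : IsOpen U) :
    IsOpen {F : Hyperspace X | F.1 ⊆ U} :=
  TopologicalSpace.GenerateOpen.basic _ (Or.inl ⟨U, hU, rfl⟩)

lemma hyper_isOpen_minus {U : Set X} (hU : IsOpen U) :
    IsOpen {F : Hyperspace X | (F.1 ∩ U).Nonempty} :=
  TopologicalSpace.GenerateOpen.basic _ (Or.inr ⟨U, hU, rfl⟩)

lemma hyper_basis (X : Type*) [TopologicalSpace X] :
    TopologicalSpace.IsTopologicalBasis ((fun f : Set (Set (Hyperspace X)) => ⋂₀ f) ''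
      {f : Set (Set (Hyperspace X)) | f.Finite ∧ f ⊆
        ({S | ∃ U : Set X, IsOpen U ∧ S = {F : Hyperspace X | F.1 ⊆ U}} ∪
          {S | ∃ U : Set X, IsOpen U ∧ S = {F : Hyperspace X | (F.1 ∩ U).Nonempty}})}) :=
  TopologicalSpace.isTopologicalBasis_of_subbasis rfl

lemma pass_plus {f : Set (Set (Hyperspace X))} (hf : f.Finite) (G : Hyperspace X) :
    (∀ s ∈ f, G ∈ s) → ∃ W : Set X, IsOpen W ∧ G.1 ⊆ W ∧
      ∀ F : Hyperspace X, F.1 ⊆ W →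
        ∀ s ∈ f, (∃ U, IsOpen U ∧ s = {F : Hyperspace X | F.1 ⊆ U}) → F ∈ s := by
  refine Set.Finite.induction_on f hf (fun _ => ⟨Set.univ, isOpen_univ, Set.subset_univ _,
    fun F _ s hs => absurd hs (Set.notMem_empty s)⟩) ?_
  rintro s f' - - ih hG
  obtain ⟨W, hWo, hGW, hW⟩ := ih (fun t ht => hG t (Set.mem_insert_of_mem _ ht))
  by_cases hs : ∃ U, IsOpen U ∧ s = {F : Hyperspace X | F.1 ⊆ U}
  · obtain ⟨U, hUo, rfl⟩ := hs
    refine ⟨U ∩ W, hUo.inter hWo, subset_inter (hG _ (Set.mem_insert _ _)) hGW, ?_⟩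
    intro F hF t ht hplus
    rcases Set.mem_insert_iff.1 ht with rfl | ht
    · exact (hF.trans Set.inter_subset_left : F.1 ⊆ U)
    · exact hW F (hF.trans Set.inter_subset_right) t ht hplus
  · refine ⟨W, hWo, hGW, ?_⟩
    intro F hF t ht hplus
    rcases Set.mem_insert_iff.1 ht with rfl | ht
    · exact absurd hplus hs
    · exact hW F hF t ht hplus

lemma pass_minus_nbhd {f : Set (Set (Hyperspace X))} (hf : f.Finite) (G : Hyperspace X) :
    (∀ s ∈ f, G ∈ s) → ∃ T : Set (Set X), T.Finite ∧
      (∀ V ∈ T, IsOpen V ∧ (G.1 ∩ V).Nonempty) ∧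
      ∀ F : Hyperspace X, (∀ V ∈ T, (F.1 ∩ V).Nonempty) →
        ∀ s ∈ f, (∃ U, IsOpen U ∧ s = {F : Hyperspace X | (F.1 ∩ U).Nonempty}) → F ∈ s := by
  refine Set.Finite.induction_on f hf (fun _ => ⟨∅, Set.finite_empty,
    fun V hV => absurd hV (Set.notMem_empty V),
    fun F _ s hs => absurd hs (Set.notMem_empty s)⟩) ?_
  rintro s f' - - ih hG
  obtain ⟨T, hTf, hTo, hT⟩ := ih (fun t ht => hG t (Set.mem_insert_of_mem _ ht))
  by_cases hs : ∃ U, IsOpen U ∧ s = {F : Hyperspace X | (F.1 ∩ U).Nonempty}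
  · obtain ⟨U, hUo, rfl⟩ := hs
    refine ⟨insert U T, hTf.insert U, ?_, ?_⟩
    · intro V hV
      rcases Set.mem_insert_iff.1 hV with rfl | hV
      · exact ⟨hUo, hG _ (Set.mem_insert _ _)⟩
      · exact hTo V hV
    · intro F hF t ht hminus
      rcases Set.mem_insert_iff.1 ht with rfl | ht
      · exact hF U (Set.mem_insert _ _)
      · exact hT F (fun V hV => hF V (Set.mem_insert_of_mem _ hV)) t ht hminus
  · refine ⟨T, hTf, hTo, ?_⟩
    intro F hF t ht hminus
    rcases Set.mem_insert_iff.1 ht with rfl | ht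
    · exact absurd hminus hs
    · exact hT F hF t ht hminus

lemma hyper_nbhd_decomp {𝒱 : Set (Hyperspace X)} (ho : IsOpen 𝒱) {G : Hyperspace X}
    (hG : G ∈ 𝒱) :
    ∃ (U : Set X) (T : Set (Set X)), IsOpen U ∧ G.1 ⊆ U ∧ T.Finite ∧
      (∀ V ∈ T, IsOpen V ∧ (G.1 ∩ V).Nonempty) ∧
      ∀ F : Hyperspace X, F.1 ⊆ U → (∀ V ∈ T, (F.1 ∩ V).Nonempty) → F ∈ 𝒱 := by
  obtain ⟨v, ⟨fs, ⟨hfin, hsub⟩, rfl⟩, hGv, hv⟩ :=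
    (hyper_basis X).exists_subset_of_mem_open hG ho
  have hGmem : ∀ s ∈ fs, G ∈ s := fun s hs => Set.mem_sInter.1 hGv s hs
  obtain ⟨W, hWo, hGW, hplus⟩ := pass_plus hfin G hGmem
  obtain ⟨T, hTf, hTo, hminus⟩ := pass_minus_nbhd hfin G hGmem
  refine ⟨W, T, hWo, hGW, hTf, hTo, fun F hFW hFT => hv (Set.mem_sInter.2 ?_)⟩
  intro s hs
  rcases hsub hs with ⟨U, hU, rfl⟩ | ⟨U, hU, rfl⟩
  · exact hplus F hFW _ hs ⟨U, hU, rfl⟩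
  · exact hminus F hFT _ hs ⟨U, hU, rfl⟩

end Hyper

section Main
variable {𝒜 : Set (Set ℕ)}

lemma pass_minus_shrink (h𝒜 : ∀ a ∈ 𝒜, Set.Infinite a)
    {f : Set (Set (Hyperspace (PsiSpace 𝒜)))} (hf : f.Finite)
    (G : Hyperspace (PsiSpace 𝒜)) {W : Set (PsiSpace 𝒜)} (hW : IsOpen W) (hGW : G.1 ⊆ W) :
    (∀ s ∈ f, G ∈ s) → ∃ D : Finset ℕ, (∀ m ∈ D, PsiSpace.nat m ∈ W) ∧
      ∀ F : Hyperspace (PsiSpace 𝒜), (∀ m ∈ D, PsiSpace.nat m ∈ F.1) →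
        ∀ s ∈ f, (∃ U, IsOpen U ∧
          s = {F : Hyperspace (PsiSpace 𝒜) | (F.1 ∩ U).Nonempty}) → F ∈ s := by
  refine Set.Finite.induction_on f hf (fun _ => ⟨∅, by simp,
    fun F _ s hs => absurd hs (Set.notMem_empty s)⟩) ?_
  rintro s f' - - ih hG
  obtain ⟨D, hDW, hD⟩ := ih (fun t ht => hG t (Set.mem_insert_of_mem _ ht))
  by_cases hs : ∃ U, IsOpen U ∧ s = {F : Hyperspace (PsiSpace 𝒜) | (F.1 ∩ U).Nonempty}
  · obtain ⟨U, hUo, rfl⟩ := hs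
    have hGU : (G.1 ∩ U).Nonempty := hG _ (Set.mem_insert _ _)
    have hUW : (U ∩ W).Nonempty := by
      obtain ⟨x, hx1, hx2⟩ := hGU; exact ⟨x, hx2, hGW hx1⟩
    obtain ⟨m, hm⟩ := psi_exists_nat_mem h𝒜 (hUo.inter hW) hUW
    refine ⟨insert m D, ?_, ?_⟩
    · intro k hk; rcases Finset.mem_insert.1 hk with rfl | hk
      · exact hm.2
      · exact hDW k hk
    · intro F hF t ht hminus
      rcases Set.mem_insert_iff.1 ht with rfl | ht
      · exact ⟨PsiSpace.nat m, hF m (Finset.mem_insert_self m D), hm.1⟩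
      · exact hD F (fun k hk => hF k (Finset.mem_insert_of_mem hk)) t ht hminus
  · refine ⟨D, hDW, ?_⟩
    intro F hF t ht hminus
    rcases Set.mem_insert_iff.1 ht with rfl | ht
    · exact absurd hminus hs
    · exact hD F hF t ht hminus

lemma hyper_shrink (h𝒜 : ∀ a ∈ 𝒜, Set.Infinite a) {𝒰 : Set (Hyperspace (PsiSpace 𝒜))}
    (ho : IsOpen 𝒰) (hne : 𝒰.Nonempty) :
    ∃ (W : Set (PsiSpace 𝒜)) (D : Finset ℕ), IsOpen W ∧ D.Nonempty ∧
      (∀ m ∈ D, PsiSpace.nat m ∈ W) ∧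
      ∀ F : Hyperspace (PsiSpace 𝒜), F.1 ⊆ W → (∀ m ∈ D, PsiSpace.nat m ∈ F.1) → F ∈ 𝒰 := by
  obtain ⟨G, hG⟩ := hne
  obtain ⟨v, ⟨fs, ⟨hfin, hsub⟩, rfl⟩, hGv, hv⟩ :=
    (hyper_basis (PsiSpace 𝒜)).exists_subset_of_mem_open hG ho
  have hGmem : ∀ s ∈ fs, G ∈ s := fun s hs => Set.mem_sInter.1 hGv s hs
  obtain ⟨W, hWo, hGW, hplus⟩ := pass_plus hfin G hGmem
  obtain ⟨D0, hD0W, hminus⟩ := pass_minus_shrink h𝒜 hfin G hWo hGW hGmem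
  have hWne : W.Nonempty := Set.Nonempty.mono hGW G.2.1
  obtain ⟨m0, hm0⟩ := psi_exists_nat_mem h𝒜 hWo hWne
  refine ⟨W, insert m0 D0, hWo, Finset.insert_nonempty _ _, ?_, ?_⟩
  · intro m hm; rcases Finset.mem_insert.1 hm with rfl | hm
    · exact hm0
    · exact hD0W m hm
  · intro F hFW hFD
    refine hv (Set.mem_sInter.2 fun s hs => ?_)
    rcases hsub hs with ⟨U, hU, rfl⟩ | ⟨U, hU, rfl⟩
    · exact hplus F hFW _ hs ⟨U, hU, rfl⟩
    · exact hminus F (fun m hm => hFD m (Finset.mem_insert_of_mem hm)) _ hs ⟨U, hU, rfl⟩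

/-- The set of p-limits of selections from the finite sets `D n`. -/
def Lset (p : Ultrafilter ℕ) (D : ℕ → Finset ℕ) : Set (PsiSpace 𝒜) :=
  {x | ∃ f : ℕ → ℕ, (∀ n, f n ∈ D n) ∧
    ∀ V : Set (PsiSpace 𝒜), IsOpen V → x ∈ V → {n | PsiSpace.nat (f n) ∈ V} ∈ p}

lemma plimit_selection {p : Ultrafilter ℕ} (hp : PPseudocompact (PsiSpace 𝒜) p) (f : ℕ → ℕ) :
    ∃ x : PsiSpace 𝒜, ∀ V : Set (PsiSpace 𝒜), IsOpen V → x ∈ V →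
      {n | PsiSpace.nat (f n) ∈ V} ∈ p := by
  obtain ⟨x, hx⟩ := hp (fun n => {PsiSpace.nat (f n)})
    (fun n => ⟨psi_isOpen_nat _, Set.singleton_nonempty _⟩)
  refine ⟨x, fun V hV hxV => ?_⟩
  have h := hx V hV hxV
  simpa [Set.singleton_inter_nonempty] using h

lemma claim_a {p : Ultrafilter ℕ} (hp : PPseudocompact (PsiSpace 𝒜) p)
    (D : ℕ → Finset ℕ) (hD : ∀ n, (D n).Nonempty) {U : Set (PsiSpace 𝒜)} (hUo : IsOpen U)
    (hsub : closure (Lset p D) ⊆ U) :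
    {n | ∀ m ∈ D n, PsiSpace.nat m ∈ U} ∈ p := by
  by_contra hnot
  have hS : ({n | ∀ m ∈ D n, PsiSpace.nat m ∈ U})ᶜ ∈ p :=
    Ultrafilter.compl_mem_iff_notMem.2 hnot
  have hf : ∀ n, ∃ m, m ∈ D n ∧ ((¬ ∀ k ∈ D n, PsiSpace.nat k ∈ U) → PsiSpace.nat m ∉ U) := by
    intro n
    by_cases h : ∀ k ∈ D n, PsiSpace.nat k ∈ U
    · obtain ⟨m, hm⟩ := hD n; exact ⟨m, hm, fun hc => absurd h hc⟩
    · push_neg at h; obtain ⟨m, hm1, hm2⟩ := h; exact ⟨m, hm1, fun _ => hm2⟩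
  choose f hfD hfU using hf
  obtain ⟨x, hx⟩ := plimit_selection hp f
  have hxL : x ∈ Lset (𝒜 := 𝒜) p D := ⟨f, hfD, hx⟩
  have hxU : x ∈ U := hsub (subset_closure hxL)
  obtain ⟨n, hn1, hn2⟩ := Filter.nonempty_of_mem (Filter.inter_mem (hx U hUo hxU) hS)
  exact absurd hn1 (hfU n hn2)

lemma claim_b {p : Ultrafilter ℕ} (D : ℕ → Finset ℕ) {V : Set (PsiSpace 𝒜)}
    (hVo : IsOpen V) (hne : (closure (Lset p D) ∩ V).Nonempty) :
    {n | ∃ m ∈ D n, PsiSpace.nat m ∈ V} ∈ p := by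
  obtain ⟨x, hxc, hxV⟩ := hne
  obtain ⟨y, hyV, hyL⟩ := mem_closure_iff.1 hxc V hVo hxV
  obtain ⟨f, hfD, hf⟩ := hyL
  exact Filter.mem_of_superset (hf V hVo hyV) (fun n hn => ⟨f n, hfD n, hn⟩)

theorem hyper_of_psi (h𝒜 : ∀ a ∈ 𝒜, Set.Infinite a) {p : Ultrafilter ℕ}
    (hp : PPseudocompact (PsiSpace 𝒜) p) : PPseudocompact (Hyperspace (PsiSpace 𝒜)) p := by
  intro 𝒰 h𝒰
  choose W D hWo hDne hDW hkey using fun n => hyper_shrink h𝒜 (h𝒰 n).1 (h𝒰 n).2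
  have hLne : (Lset (𝒜 := 𝒜) p D).Nonempty := by
    obtain ⟨x, hx⟩ := plimit_selection hp (fun n => (hDne n).choose)
    exact ⟨x, fun n => (hDne n).choose, fun n => (hDne n).choose_spec, hx⟩
  refine ⟨⟨closure (Lset p D), hLne.mono subset_closure, isClosed_closure⟩, ?_⟩
  intro 𝒱 h𝒱o hmem
  obtain ⟨U, T, hUo, hFU, hTfin, hTprop, hback⟩ := hyper_nbhd_decomp h𝒱o hmem
  have hFU' : closure (Lset (𝒜 := 𝒜) p D) ⊆ U := hFU
  have hQa : {n | ∀ m ∈ D n, PsiSpace.nat m ∈ U} ∈ p := claim_a hp D hDne hUo hFU'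
  have hQb : ∀ V ∈ T, {n | ∃ m ∈ D n, PsiSpace.nat m ∈ V ∩ U} ∈ p := by
    intro V hV
    obtain ⟨hVo, hVne⟩ := hTprop V hV
    refine claim_b (p := p) D (hVo.inter hUo) ?_
    obtain ⟨x, hx1, hx2⟩ := hVne
    exact ⟨x, hx1, hx2, hFU' hx1⟩
  have hbig := Filter.inter_mem hQa ((Filter.biInter_mem hTfin).2 hQb)
  refine Filter.mem_of_superset hbig ?_
  rintro n ⟨hn1, hn2⟩
  have hn2' : ∀ V ∈ T, ∃ m ∈ D n, PsiSpace.nat m ∈ V ∩ U :=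
    fun V hV => Set.mem_iInter₂.1 hn2 V hV
  obtain ⟨m1, hm1⟩ := hDne n
  have hEne : (PsiSpace.nat (𝒜 := 𝒜) '' ((D n : Set ℕ))).Nonempty :=
    ⟨_, ⟨m1, Finset.mem_coe.2 hm1, rfl⟩⟩
  have hEcl : IsClosed (PsiSpace.nat (𝒜 := 𝒜) '' ((D n : Set ℕ))) :=
    ((D n).finite_toSet.image _).isClosed
  refine ⟨⟨_, hEne, hEcl⟩, ?_, ?_⟩
  · refine hkey n _ ?_ ?_
    · rintro x ⟨m, hm, rfl⟩; exact hDW n m (Finset.mem_coe.1 hm)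
    · intro m hm; exact ⟨m, Finset.mem_coe.2 hm, rfl⟩
  · refine hback _ ?_ ?_
    · rintro x ⟨m, hm, rfl⟩; exact hn1 m (Finset.mem_coe.1 hm)
    · intro V hV
      obtain ⟨m, hmD, hmV, _⟩ := hn2' V hV
      exact ⟨PsiSpace.nat m, ⟨m, Finset.mem_coe.2 hmD, rfl⟩, hmV⟩

theorem psi_of_hyper (h𝒜 : ∀ a ∈ 𝒜, Set.Infinite a) {p : Ultrafilter ℕ}
    (hp : PPseudocompact (Hyperspace (PsiSpace 𝒜)) p) : PPseudocompact (PsiSpace 𝒜) p := by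
  intro U hU
  have hne : ∀ n, {F : Hyperspace (PsiSpace 𝒜) | F.1 ⊆ U n}.Nonempty := by
    intro n
    obtain ⟨m, hm⟩ := psi_exists_nat_mem h𝒜 (hU n).1 (hU n).2
    exact ⟨⟨{PsiSpace.nat m}, Set.singleton_nonempty _, (Set.finite_singleton _).isClosed⟩,
      Set.singleton_subset_iff.2 hm⟩
  obtain ⟨F₀, hF₀⟩ := hp (fun n => {F : Hyperspace (PsiSpace 𝒜) | F.1 ⊆ U n})
    (fun n => ⟨hyper_isOpen_plus (hU n).1, hne n⟩)
  obtain ⟨x, hx⟩ := F₀.2.1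
  refine ⟨x, fun V hV hxV => ?_⟩
  have h := hF₀ {F : Hyperspace (PsiSpace 𝒜) | (F.1 ∩ V).Nonempty}
    (hyper_isOpen_minus hV) ⟨x, hx, hxV⟩
  refine Filter.mem_of_superset h ?_
  rintro n ⟨G, hG1, hG2⟩
  obtain ⟨y, hy1, hy2⟩ := hG2
  exact ⟨y, hG1 hy1, hy2⟩

end Main

section Codes
variable {𝒜 : Set (Set ℕ)}

def PsiCode (𝒜 : Set (Set ℕ)) : Type := ℕ ⊕ ({a : Set ℕ // a ∈ 𝒜} × Finset ℕ)

def decodeC : PsiCode 𝒜 → Set (PsiSpace 𝒜)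
  | Sum.inl m => {PsiSpace.nat m}
  | Sum.inr x => insert (PsiSpace.pt x.1) (PsiSpace.nat '' ((x.1 : Set ℕ) \ (x.2 : Set ℕ)))

lemma decodeC_isOpen (c : PsiCode 𝒜) : IsOpen (decodeC c) := by
  cases c with
  | inl m => exact psi_isOpen_nat m
  | inr x => exact psi_isOpen_pt x.1 x.2.finite_toSet

lemma decodeC_nonempty (c : PsiCode 𝒜) : (decodeC c).Nonempty := by
  cases c with
  | inl m => exact Set.singleton_nonempty _
  | inr x => exact ⟨PsiSpace.pt x.1, Set.mem_insert _ _⟩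

lemma exists_code (h𝒜 : ∀ a ∈ 𝒜, Set.Infinite a) {V : Set (PsiSpace 𝒜)}
    (hV : IsOpen V) (hne : V.Nonempty) : ∃ c : PsiCode 𝒜, decodeC c ⊆ V := by
  obtain ⟨x, hx⟩ := hne
  cases x with
  | inl m => exact ⟨Sum.inl m, Set.singleton_subset_iff.2 hx⟩
  | inr a =>
    obtain ⟨F, hF, hsub⟩ := psi_nbhd_pt hV a hx
    refine ⟨Sum.inr (a, hF.toFinset), ?_⟩
    simpa [decodeC, hF.coe_toFinset] using hsub

lemma mk_codeSeq (h : 𝒜.Infinite) :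
    Cardinal.mk (ℕ → PsiCode 𝒜) = Cardinal.continuum := by
  have h1 : Cardinal.mk (PsiCode 𝒜) ≤ Cardinal.continuum := by
    have he : Cardinal.mk (PsiCode 𝒜) =
        Cardinal.mk ℕ + Cardinal.mk {a : Set ℕ // a ∈ 𝒜} * Cardinal.mk (Finset ℕ) := by
      show Cardinal.mk (ℕ ⊕ ({a : Set ℕ // a ∈ 𝒜} × Finset ℕ)) = _
      simp [Cardinal.mk_sum, Cardinal.mk_prod]
    rw [he, Cardinal.mk_nat]
    have h𝒜c : Cardinal.mk {a : Set ℕ // a ∈ 𝒜} ≤ Cardinal.continuum := by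
      have h2 := Cardinal.mk_set_le 𝒜
      rwa [Cardinal.mk_set, Cardinal.mk_nat, Cardinal.two_power_aleph0] at h2
    have hFc : Cardinal.mk (Finset ℕ) ≤ Cardinal.aleph0 := Cardinal.mk_le_aleph0
    calc Cardinal.aleph0 + Cardinal.mk {a : Set ℕ // a ∈ 𝒜} * Cardinal.mk (Finset ℕ)
        ≤ Cardinal.continuum + Cardinal.continuum * Cardinal.continuum := by
          gcongr
          · exact Cardinal.aleph0_le_continuum
          · exact hFc.trans Cardinal.aleph0_le_continuum
      _ = Cardinal.continuum := by
          rw [Cardinal.continuum_mul_self, Cardinal.continuum_add_self]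
  have h2 : (2 : Cardinal) ≤ Cardinal.mk (PsiCode 𝒜) := by
    have ha : Cardinal.aleph0 ≤ Cardinal.mk (PsiCode 𝒜) := by
      rw [← Cardinal.mk_nat]
      exact Cardinal.mk_le_of_injective (f := (Sum.inl : ℕ → PsiCode 𝒜))
        (fun a b hab => Sum.inl.inj hab)
    exact le_trans ((Cardinal.nat_lt_aleph0 2).le.trans_eq' (by norm_num)) ha
  rw [Cardinal.mk_arrow, Cardinal.mk_nat]
  simp only [Cardinal.lift_id, Cardinal.lift_aleph0]
  exact Cardinal.power_aleph0_of_le_continuum h2 h1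

end Codes


lemma psi_of_ka {𝒜 : Set (Set ℕ)} (h𝒜 : AlmostDisjointFamily 𝒜) {A : Set (Ultrafilter ℕ)}
    (h : KAPseudocompact (PsiSpace 𝒜) Cardinal.continuum A) :
    ∃ p ∈ A, PPseudocompact (PsiSpace 𝒜) p := by
  obtain ⟨p, hpA, hp⟩ := h (ℕ → PsiCode 𝒜) (mk_codeSeq h𝒜.1) (fun c n => decodeC (c n))
    (fun c n => ⟨decodeC_isOpen _, decodeC_nonempty _⟩)
  refine ⟨p, hpA, ?_⟩
  intro V hV
  choose c hc using fun n => exists_code h𝒜.2.1 (hV n).1 (hV n).2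
  obtain ⟨x, hx⟩ := hp c
  refine ⟨x, fun O hO hxO => Filter.mem_of_superset (hx O hO hxO) ?_⟩
  rintro n ⟨y, hy1, hy2⟩
  exact ⟨y, hc n hy1, hy2⟩

theorem stmt5 (A : Set (Ultrafilter ℕ)) (hA : ∀ p ∈ A, IsFree p)
    (𝒜 : Set (Set ℕ)) (h𝒜 : AlmostDisjointFamily 𝒜) :
    List.TFAE [(∃ p ∈ A, PPseudocompact (Hyperspace (PsiSpace 𝒜)) p),
      (∃ p ∈ A, PPseudocompact (PsiSpace 𝒜) p),
      KAPseudocompact (PsiSpace 𝒜) Cardinal.continuum A] := by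
  tfae_have 1 → 2
  · rintro ⟨p, hpA, hp⟩
    exact ⟨p, hpA, psi_of_hyper h𝒜.2.1 hp⟩
  tfae_have 2 → 1
  · rintro ⟨p, hpA, hp⟩
    exact ⟨p, hpA, hyper_of_psi h𝒜.2.1 hp⟩
  tfae_have 2 → 3
  · rintro ⟨p, hpA, hp⟩
    exact fun ι _ U hU => ⟨p, hpA, fun i => hp (U i) (hU i)⟩
  tfae_have 3 → 2
  · exact psi_of_ka h𝒜
  tfae_finish
end

section
/- For every cardinal κ < n(ω*) and every MAD family 𝒜 on ℕ, the Isbell–Mrówka space Ψ(𝒜) is (κ, ω*)-pseudocompact, where ω* here denotes the set of all free ultrafilters on ℕ. -/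
open Set

/-- ω*: the space of free ultrafilters on ℕ. -/
def OmegaStar : Type := {p : Ultrafilter ℕ // IsFree p}

/-- The topology on ω*, generated by the base B* = {p : B ∈ p} for B ⊆ ℕ. -/
instance : TopologicalSpace OmegaStar :=
  TopologicalSpace.generateFrom
    {S : Set OmegaStar | ∃ B : Set ℕ, S = {p : OmegaStar | B ∈ p.1}}

/-- The Baire (Novák) number n(ω*): the least cardinality of a family of dense open
subsets of ω* with empty intersection. -/
noncomputable def baireNumberOmegaStar : Cardinal.{0} :=
  sInf {c : Cardinal.{0} | ∃ D : Set (Set OmegaStar),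
    (∀ U ∈ D, IsOpen U ∧ Dense U) ∧ ⋂₀ D = ∅ ∧ Cardinal.mk ↥D = c}


/-- Every open set containing a point `pt a` contains a basic neighbourhood. -/
lemma psi_nhds_pt {𝒜 : Set (Set ℕ)} (a : {a : Set ℕ // a ∈ 𝒜}) {V : Set (PsiSpace 𝒜)}
    (hV : IsOpen V) (ha : PsiSpace.pt a ∈ V) :
    ∃ F : Set ℕ, F.Finite ∧
      insert (PsiSpace.pt a) (PsiSpace.nat '' ((a : Set ℕ) \ F)) ⊆ V := by
  have hV' : TopologicalSpace.GenerateOpen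
      ({S | ∃ n : ℕ, S = {PsiSpace.nat n}} ∪
        {S | ∃ (b : {a : Set ℕ // a ∈ 𝒜}) (F : Set ℕ), F.Finite ∧
          S = insert (PsiSpace.pt b) (PsiSpace.nat '' ((b : Set ℕ) \ F))}) V := hV
  clear hV
  revert ha
  induction hV' with
  | basic s hs =>
      intro ha
      rcases hs with ⟨n, rfl⟩ | ⟨b, F, hF, rfl⟩
      · simp only [mem_singleton_iff, PsiSpace.pt, PsiSpace.nat] at ha
        exact (Sum.inr_ne_inl ha).elim
      · rcases ha with h | h
        · have hab : a = b := Sum.inr.inj h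
          subst hab
          exact ⟨F, hF, subset_rfl⟩
        · rcases h with ⟨m, _, hm⟩
          exact absurd hm (by simp [PsiSpace.pt, PsiSpace.nat])
  | univ => exact fun _ => ⟨∅, finite_empty, subset_univ _⟩
  | inter s t hs ht ihs iht =>
      intro ha
      obtain ⟨F₁, hF₁, h₁⟩ := ihs ha.1
      obtain ⟨F₂, hF₂, h₂⟩ := iht ha.2
      refine ⟨F₁ ∪ F₂, hF₁.union hF₂, subset_inter ?_ ?_⟩
      · exact (insert_subset_insert (image_mono
          (diff_subset_diff_right subset_union_left))).trans h₁
      · exact (insert_subset_insert (image_mono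
          (diff_subset_diff_right subset_union_right))).trans h₂
  | sUnion S hS ih =>
      rintro ⟨s, hsS, hps⟩
      obtain ⟨F, hF, hsub⟩ := ih s hsS hps
      exact ⟨F, hF, hsub.trans (subset_sUnion_of_mem hsS)⟩

/-- Every nonempty open subset of the Isbell–Mrówka space contains an isolated point. -/
lemma psi_open_nat {𝒜 : Set (Set ℕ)} (h𝒜 : AlmostDisjointFamily 𝒜)
    {V : Set (PsiSpace 𝒜)} (hV : IsOpen V) (hne : V.Nonempty) :
    ∃ m : ℕ, PsiSpace.nat m ∈ V := by
  obtain ⟨x, hx⟩ := hne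
  rcases x with n | a
  · exact ⟨n, hx⟩
  · obtain ⟨F, hF, hsub⟩ := psi_nhds_pt a hV hx
    obtain ⟨m, hm⟩ := ((h𝒜.2.1 a a.2).diff hF).nonempty
    exact ⟨m, hsub (mem_insert_of_mem _ ⟨m, hm, rfl⟩)⟩

/-- Every infinite subset of ℕ belongs to some free ultrafilter. -/
lemma exists_free_mem {B : Set ℕ} (hB : B.Infinite) :
    ∃ p : Ultrafilter ℕ, IsFree p ∧ B ∈ p := by
  let e : ℕ ↪ B := hB.natEmbedding _
  set g : ℕ → ℕ := fun n => (e n : ℕ) with hg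
  have hginj : Function.Injective g := Subtype.val_injective.comp e.injective
  refine ⟨(Filter.hyperfilter ℕ).map g, ?_, ?_⟩
  · rw [IsFree]
    rw [Filter.le_cofinite_iff_compl_singleton_mem]
    intro x
    have hfin : (g ⁻¹' {x}).Finite :=
      Set.Finite.preimage hginj.injOn (finite_singleton x)
    have : (g ⁻¹' {x})ᶜ ∈ Filter.cofinite := by
      rw [Filter.mem_cofinite, compl_compl]; exact hfin
    exact Filter.hyperfilter_le_cofinite this
  · have : g ⁻¹' B = univ := eq_univ_of_forall fun n => (e n).2
    show g ⁻¹' B ∈ Filter.hyperfilter ℕ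
    rw [this]
    exact Filter.univ_mem

/-- Every open set of ω* containing p contains a basic set B* with B ∈ p. -/
lemma omegaStar_nhds {W : Set OmegaStar} (hW : IsOpen W) {p : OmegaStar} (hp : p ∈ W) :
    ∃ B : Set ℕ, B ∈ p.1 ∧ {q : OmegaStar | B ∈ q.1} ⊆ W := by
  have hW' : TopologicalSpace.GenerateOpen
      {S : Set OmegaStar | ∃ B : Set ℕ, S = {p : OmegaStar | B ∈ p.1}} W := hW
  clear hW
  revert hp
  induction hW' with
  | basic s hs =>
      rcases hs with ⟨B, rfl⟩
      exact fun hp => ⟨B, hp, fun q hq => hq⟩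
  | univ => exact fun _ => ⟨univ, Filter.univ_mem, subset_univ _⟩
  | inter s t hs ht ihs iht =>
      intro hp
      obtain ⟨B₁, hB₁, h₁⟩ := ihs hp.1
      obtain ⟨B₂, hB₂, h₂⟩ := iht hp.2
      refine ⟨B₁ ∩ B₂, Filter.inter_mem hB₁ hB₂, fun q hq => ⟨?_, ?_⟩⟩
      · exact h₁ (Filter.mem_of_superset hq inter_subset_left)
      · exact h₂ (Filter.mem_of_superset hq inter_subset_right)
  | sUnion S hS ih =>
      rintro ⟨s, hsS, hps⟩
      obtain ⟨B, hB, hsub⟩ := ih s hsS hps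
      exact ⟨B, hB, hsub.trans (subset_sUnion_of_mem hsS)⟩

/-- Members of a free ultrafilter are infinite. -/
lemma infinite_of_mem_free {p : Ultrafilter ℕ} (hp : IsFree p) {B : Set ℕ}
    (hB : B ∈ p) : B.Infinite := by
  intro hfin
  have hc : Bᶜ ∈ p := hp (by rw [Filter.mem_cofinite, compl_compl]; exact hfin)
  have : (∅ : Set ℕ) ∈ p := by
    have := Filter.inter_mem hB hc
    rwa [inter_compl_self] at this
  exact Ultrafilter.empty_notMem this

/-- Combinatorial refinement: every infinite set has an infinite subset on which
f is either constant, or injective with image inside a member of the MAD family. -/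
lemma mad_refine {𝒜 : Set (Set ℕ)} (h𝒜 : MadFamily 𝒜) (f : ℕ → ℕ) {B : Set ℕ}
    (hB : B.Infinite) :
    ∃ B' : Set ℕ, B' ⊆ B ∧ B'.Infinite ∧
      ((∃ m, ∀ n ∈ B', f n = m) ∨ ∃ a ∈ 𝒜, Set.InjOn f B' ∧ f '' B' ⊆ a) := by
  by_cases him : (f '' B).Finite
  · have : ∃ m ∈ f '' B, (B ∩ f ⁻¹' {m}).Infinite := by
      by_contra h
      push_neg at h
      have hsub : B ⊆ ⋃ m ∈ f '' B, (B ∩ f ⁻¹' {m}) := fun n hn =>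
        mem_biUnion ⟨n, hn, rfl⟩ ⟨hn, rfl⟩
      exact hB ((him.biUnion fun m hm => h m hm).subset hsub)
    obtain ⟨m, _, hinf⟩ := this
    exact ⟨B ∩ f ⁻¹' {m}, inter_subset_left, hinf, Or.inl ⟨m, fun n hn => hn.2⟩⟩
  · obtain ⟨a, ha, hinf⟩ := h𝒜.2 (f '' B) him
    set g : ℕ → ℕ := Function.invFunOn f B with hgdef
    have hex : ∀ y ∈ f '' B, ∃ x ∈ B, f x = y := by
      rintro y ⟨x, hx, rfl⟩; exact ⟨x, hx, rfl⟩
    have hgB : ∀ y ∈ f '' B, g y ∈ B := fun y hy => Function.invFunOn_mem (hex y hy)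
    have hfg : ∀ y ∈ f '' B, f (g y) = y := fun y hy => Function.invFunOn_eq (hex y hy)
    set T : Set ℕ := f '' B ∩ a with hT
    have hTsub : T ⊆ f '' B := inter_subset_left
    have hginj : Set.InjOn g T := by
      intro y₁ h₁ y₂ h₂ hgy
      rw [← hfg y₁ (hTsub h₁), ← hfg y₂ (hTsub h₂), hgy]
    refine ⟨g '' T, ?_, hinf.image hginj, Or.inr ⟨a, ha, ?_, ?_⟩⟩
    · rintro x ⟨y, hy, rfl⟩; exact hgB y (hTsub hy)
    · rintro x₁ ⟨y₁, h₁, rfl⟩ x₂ ⟨y₂, h₂, rfl⟩ hfx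
      rw [hfg y₁ (hTsub h₁), hfg y₂ (hTsub h₂)] at hfx
      rw [hfx]
    · rintro z ⟨x, ⟨y, hy, rfl⟩, rfl⟩
      rw [hfg y (hTsub hy)]
      exact hy.2

/-- From a witnessing set in p, construct a p-limit of the sequence U. -/
lemma plimit_of_witness {𝒜 : Set (Set ℕ)} {p : Ultrafilter ℕ} (hp : IsFree p)
    (U : ℕ → Set (PsiSpace 𝒜)) (f : ℕ → ℕ) (hf : ∀ n, PsiSpace.nat (f n) ∈ U n)
    {B : Set ℕ} (hB : B ∈ p)
    (hd : (∃ m, ∀ n ∈ B, f n = m) ∨ ∃ a ∈ 𝒜, Set.InjOn f B ∧ f '' B ⊆ a) :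
    ∃ x : PsiSpace 𝒜, IsPLimit p U x := by
  rcases hd with ⟨m, hm⟩ | ⟨a, ha, hinj, hsub⟩
  · refine ⟨PsiSpace.nat m, fun V hV hmV => ?_⟩
    refine Filter.mem_of_superset hB fun n hn => ?_
    exact ⟨PsiSpace.nat m, by rw [← hm n hn]; exact hf n, hmV⟩
  · refine ⟨PsiSpace.pt ⟨a, ha⟩, fun V hV hmV => ?_⟩
    obtain ⟨F, hF, hss⟩ := psi_nhds_pt ⟨a, ha⟩ hV hmV
    have hfin : (B ∩ f ⁻¹' F).Finite := by
      apply Set.Finite.of_finite_image _ (hinj.mono inter_subset_left)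
      exact hF.subset (by rintro y ⟨x, hx, rfl⟩; exact hx.2)
    have hmem : B \ f ⁻¹' F ∈ p := by
      have hc : (B ∩ f ⁻¹' F)ᶜ ∈ p := hp (by rw [Filter.mem_cofinite, compl_compl]; exact hfin)
      have := Filter.inter_mem hB hc
      refine Filter.mem_of_superset this ?_
      rintro n ⟨hn, hnc⟩
      exact ⟨hn, fun hFn => hnc ⟨hn, hFn⟩⟩
    refine Filter.mem_of_superset hmem fun n hn => ?_
    refine ⟨PsiSpace.nat (f n), hf n, hss (mem_insert_of_mem _ ?_)⟩
    exact ⟨f n, ⟨hsub ⟨n, hn.1, rfl⟩, hn.2⟩, rfl⟩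

/-- Basic sets of ω* are open. -/
lemma omegaStar_basic_open (B : Set ℕ) : IsOpen {q : OmegaStar | B ∈ q.1} :=
  TopologicalSpace.GenerateOpen.basic _ ⟨B, rfl⟩

theorem stmt7 (κ : Cardinal.{0}) (hκ : κ < baireNumberOmegaStar)
    (𝒜 : Set (Set ℕ)) (h𝒜 : MadFamily 𝒜) :
    KAPseudocompact (PsiSpace 𝒜) κ {p : Ultrafilter ℕ | IsFree p} := by
  intro ι hι U hU
  have hf : ∀ i n, ∃ m, PsiSpace.nat m ∈ U i n := fun i n =>
    psi_open_nat h𝒜.1 (hU i n).1 (hU i n).2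
  choose f hfm using hf
  set E : ι → Set OmegaStar := fun i =>
    {p : OmegaStar | ∃ B : Set ℕ, B ∈ p.1 ∧
      ((∃ m, ∀ n ∈ B, f i n = m) ∨ ∃ a ∈ 𝒜, Set.InjOn (f i) B ∧ f i '' B ⊆ a)} with hEdef
  have hEopen : ∀ i, IsOpen (E i) := by
    intro i
    have : E i = ⋃ B ∈ {B : Set ℕ |
        (∃ m, ∀ n ∈ B, f i n = m) ∨ ∃ a ∈ 𝒜, Set.InjOn (f i) B ∧ f i '' B ⊆ a},
        {q : OmegaStar | B ∈ q.1} := by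
      ext p
      simp only [hEdef, mem_setOf_eq, mem_iUnion, exists_prop]
      constructor
      · rintro ⟨B, h1, h2⟩; exact ⟨B, h2, h1⟩
      · rintro ⟨B, h2, h1⟩; exact ⟨B, h1, h2⟩
    rw [this]
    exact isOpen_biUnion fun B _ => omegaStar_basic_open B
  have hEdense : ∀ i, Dense (E i) := by
    intro i
    rw [dense_iff_inter_open]
    intro W hW ⟨p₀, hp₀⟩
    obtain ⟨B, hBp, hBW⟩ := omegaStar_nhds hW hp₀
    have hBinf : B.Infinite := infinite_of_mem_free p₀.2 hBp
    obtain ⟨B', hB'sub, hB'inf, hB'd⟩ := mad_refine h𝒜 (f i) hBinf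
    obtain ⟨p, hpfree, hpB'⟩ := exists_free_mem hB'inf
    refine ⟨⟨p, hpfree⟩, hBW ?_, B', hpB', hB'd⟩
    exact Filter.mem_of_superset hpB' hB'sub
  have hne : (⋂ i, E i).Nonempty := by
    by_contra h
    have hempty : ⋂ i, E i = ∅ := Set.not_nonempty_iff_eq_empty.mp h
    have hmem : Cardinal.mk ↥(Set.range E) ∈ {c : Cardinal.{0} |
        ∃ D : Set (Set OmegaStar),
          (∀ V ∈ D, IsOpen V ∧ Dense V) ∧ ⋂₀ D = ∅ ∧ Cardinal.mk ↥D = c} := by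
      refine ⟨Set.range E, ?_, ?_, rfl⟩
      · rintro V ⟨i, rfl⟩; exact ⟨hEopen i, hEdense i⟩
      · rw [Set.sInter_range]; exact hempty
    have h1 : baireNumberOmegaStar ≤ Cardinal.mk ↥(Set.range E) := csInf_le' hmem
    have h2 : Cardinal.mk ↥(Set.range E) ≤ κ := by
      rw [← hι]; exact Cardinal.mk_range_le
    exact absurd (h1.trans h2) (not_le.mpr hκ)
  obtain ⟨p, hp⟩ := hne
  refine ⟨p.1, p.2, fun i => ?_⟩
  have hpi : p ∈ E i := Set.mem_iInter.mp hp i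
  obtain ⟨B, hBp, hBd⟩ := hpi
  exact plimit_of_witness p.2 (U i) (f i) (fun n => hfm i n) hBp hBd
end

section
/- Let 𝒜 be an almost disjoint family on ℕ and let D be a fin sequence. If there exists an infinite set J ⊆ ℕ such that ⋃_{n∈J} D(n) ∈ I(𝒜), then there exists an infinite set J' ⊆ J such that the family {{n ∈ J' : a ∩ D(n) ≠ ∅} : a ∈ 𝒜} \ [J']^{<ω} is centered. -/
open Set

/-- The ideal I(𝒜) generated by 𝒜 (together with the finite sets):
X ∈ I(𝒜) iff X ⊆* b₁ ∪ ⋯ ∪ b_k for finitely many bᵢ ∈ 𝒜. -/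
def IdealOf (𝒜 : Set (Set ℕ)) : Set (Set ℕ) :=
  {X : Set ℕ | ∃ T : Finset (Set ℕ), ↑T ⊆ 𝒜 ∧ (X \ ⋃₀ (↑T : Set (Set ℕ))).Finite}

/-- A tight MAD family: for every sequence of sets in I⁺(𝒜) there is a member of 𝒜
meeting each of them infinitely. -/
def TightMadFamily (𝒜 : Set (Set ℕ)) : Prop :=
  MadFamily 𝒜 ∧ ∀ X : ℕ → Set ℕ, (∀ n, X n ∉ IdealOf 𝒜) →
    ∃ a ∈ 𝒜, ∀ n, (a ∩ X n).Infinite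

lemma key (D : ℕ → Finset ℕ) (hD : FinSeq D) (G : Set ℕ) (hG : G.Finite) :
    {n : ℕ | ∃ k ∈ D n, k ∈ G}.Finite := by
  classical
  set A := {n : ℕ | ∃ k ∈ D n, k ∈ G}
  have : ∀ n ∈ A, ∃ k, k ∈ D n ∧ k ∈ G := fun n hn => by
    obtain ⟨k, hk1, hk2⟩ := hn; exact ⟨k, hk1, hk2⟩
  choose! f hf1 hf2 using this
  have hinj : Set.InjOn f A := by
    intro n hn m hm hnm
    by_contra hne
    have := hD.2 n m hne
    exact (Finset.disjoint_left.1 this (hf1 n hn)) (hnm ▸ hf1 m hm)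
  have himg : f '' A ⊆ G := by rintro _ ⟨n, hn, rfl⟩; exact hf2 n hn
  exact Set.Finite.of_finite_image (hG.subset himg) hinj

lemma shrink (D : ℕ → Finset ℕ) (S : Finset (Set ℕ)) (K : Set ℕ) (hK : K.Infinite) :
    ∃ J' ⊆ K, J'.Infinite ∧ ∀ b ∈ S,
      (∀ n ∈ J', ∃ k ∈ D n, k ∈ b) ∨ (∀ n ∈ J', ∀ k ∈ D n, k ∉ b) := by
  classical
  induction S using Finset.induction with
  | empty => exact ⟨K, subset_rfl, hK, by simp⟩
  | @insert b S hb ih =>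
    obtain ⟨J₂, hsub, hinf, hprop⟩ := ih
    by_cases hM : {n ∈ J₂ | ∃ k ∈ D n, k ∈ b}.Infinite
    · refine ⟨{n ∈ J₂ | ∃ k ∈ D n, k ∈ b}, fun n hn => hsub hn.1, hM, ?_⟩
      intro b' hb'
      rcases Finset.mem_insert.1 hb' with rfl | hb'
      · exact Or.inl fun n hn => hn.2
      · rcases hprop b' hb' with h | h
        · exact Or.inl fun n hn => h n hn.1
        · exact Or.inr fun n hn => h n hn.1
    · rw [Set.not_infinite] at hM
      refine ⟨J₂ \ {n ∈ J₂ | ∃ k ∈ D n, k ∈ b}, fun n hn => hsub hn.1,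
        hinf.diff hM, ?_⟩
      intro b' hb'
      rcases Finset.mem_insert.1 hb' with rfl | hb'
      · refine Or.inr fun n hn k hk hkb => hn.2 ⟨hn.1, k, hk, hkb⟩
      · rcases hprop b' hb' with h | h
        · exact Or.inl fun n hn => h n hn.1
        · exact Or.inr fun n hn => h n hn.1
theorem stmt12 (𝒜 : Set (Set ℕ)) (h𝒜 : AlmostDisjointFamily 𝒜)
    (D : ℕ → Finset ℕ) (hD : FinSeq D) (J : Set ℕ) (hJ : J.Infinite)
    (hJD : (⋃ n ∈ J, (↑(D n) : Set ℕ)) ∈ IdealOf 𝒜) :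
    ∃ J' ⊆ J, J'.Infinite ∧
      Centered ({S : Set ℕ | ∃ a ∈ 𝒜, S = meetSet D J' a} \
        {S : Set ℕ | S ⊆ J' ∧ S.Finite}) := by
  classical
  obtain ⟨T, hT𝒜, hfin⟩ := hJD
  set U : Set ℕ := ⋃₀ (↑T : Set (Set ℕ)) with hU
  set E : Set ℕ := (⋃ n ∈ J, (↑(D n) : Set ℕ)) \ U with hE
  have hB : {n : ℕ | ∃ k ∈ D n, k ∈ E}.Finite := key D hD E hfin
  set J₁ : Set ℕ := J \ {n : ℕ | ∃ k ∈ D n, k ∈ E} with hJ₁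
  have hJ₁inf : J₁.Infinite := hJ.diff hB
  have hcov : ∀ n ∈ J₁, (↑(D n) : Set ℕ) ⊆ U := by
    intro n hn k hk
    by_contra hkU
    exact hn.2 ⟨k, hk, ⟨Set.mem_biUnion hn.1 hk, hkU⟩⟩
  obtain ⟨J', hsub₁, hinf, hprop⟩ := shrink D T J₁ hJ₁inf
  have hsubJ : J' ⊆ J := hsub₁.trans (Set.diff_subset)
  refine ⟨J', hsubJ, hinf, ?_⟩
  intro T' hT'sub hT'fin
  have hall : ∀ S ∈ T', S = J' := by
    intro S hS
    obtain ⟨⟨a, ha𝒜, rfl⟩, hnot⟩ := hT'sub hS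
    have hms : meetSet D J' a ⊆ J' := fun n hn => hn.1
    have hinfS : ¬ (meetSet D J' a).Finite := fun h => hnot ⟨hms, h⟩
    by_cases haT : a ∈ T
    · rcases hprop a haT with h | h
      · ext n
        exact ⟨fun hn => hn.1, fun hn => ⟨hn, h n hn⟩⟩
      · exact absurd (Set.finite_empty.subset
          (fun n hn => absurd hn.2 (by simpa using fun k hk => h n hn.1 k hk)))
          hinfS
    · exfalso
      have hGfin : (a ∩ U).Finite := by
        have : a ∩ U = ⋃ b ∈ (↑T : Set (Set ℕ)), a ∩ b := by
          rw [hU, Set.sUnion_eq_biUnion, Set.inter_iUnion₂]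
        rw [this]
        exact Set.Finite.biUnion T.finite_toSet fun b hb =>
          h𝒜.2.2 a ha𝒜 b (hT𝒜 hb) (fun h => haT (h ▸ hb))
      refine hinfS ((key D hD (a ∩ U) hGfin).subset ?_)
      rintro n ⟨hn, k, hk, hka⟩
      exact ⟨k, hk, hka, hcov n (hsub₁ hn) hk⟩
  have : J' ⊆ ⋂₀ T' := fun x hx S hS => (hall S hS) ▸ hx
  exact hinf.mono this
end
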